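/- arXiv:1312.1142 — 11 statements merged into one kernel-verified Lean document; each statement's English description precedes it below -/
import Mathlib

section
/- Let A, E ∈ ℝ^{n×n}, B ∈ ℝ^{n×m}, let s_1, …, s_k be positive real numbers and b_1, …, b_k ∈ ℝ^m with ‖b_i‖_2 = 1, and assume A − s_i E is invertible for each i. Define B_{⊥,0} = B and, for i = 1, …, k, the tangential ADI iterates z_i = √(2 s_i) (A − s_i E)^{-1} B_{⊥,i−1} b_i ∈ ℝ^n and B_{⊥,i} = B_{⊥,i−1} + √(2 s_i) E z_i b_iᵀ. Then the low-rank factor Z = [z_1, …, z_k] ∈ ℝ^{n×k} satisfies the residual factorization A (Z Zᵀ) Eᵀ + E (Z Zᵀ) Aᵀ + B Bᵀ = B_{⊥,k} B_{⊥,k}ᵀ; i.e., B_{⊥,k} is a low-rank factor of the Lyapunov residual of the approximation P̂ = Z Zᵀ. -/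
/-!
Each ADI step changes the residual factor by a rank-one term: with `u = E z` and `w = B⊥ b`, the
shifted solve gives `A z = s u + √(2s) w`, so the Lyapunov residual increment
`A z zᵀ Eᵀ + E z zᵀ Aᵀ = √(2s) (u wᵀ + w uᵀ) + 2s u uᵀ` equals
`(B⊥ + √(2s) u bᵀ)(B⊥ + √(2s) u bᵀ)ᵀ - B⊥ B⊥ᵀ`, using `bᵀ b = 1`.
Summing over the steps, `Z Zᵀ = ∑ zᵢ zᵢᵀ` and the increments telescope.
-/

open Matrix

theorem Fin.sum_univ_succ_sub_castSucc {M : Type*} [AddCommGroup M] {k : ℕ}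
    (f : Fin (k + 1) → M) : ∑ i : Fin k, (f i.succ - f i.castSucc) = f (Fin.last k) - f 0 := by
  induction k with
  | zero => simp
  | succ k ih =>
    have h := ih (fun i => f i.castSucc)
    simp only [← Fin.succ_castSucc, Fin.castSucc_zero] at h
    rw [Fin.sum_univ_castSucc, h, Fin.succ_last]
    abel

theorem Matrix.mul_transpose_eq_sum_vecMulVec_col {R n k : Type*} [NonUnitalNonAssocSemiring R]
    [Fintype k] (Z : Matrix n k R) : Z * Zᵀ = ∑ j, vecMulVec (Z.col j) (Z.col j) := by
  ext p q
  simp [mul_apply, vecMulVec_apply, Matrix.sum_apply]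

theorem tangential_adi_residual_factor_step {R n m : Type*} [CommRing R] [Fintype n] [Fintype m]
    (A E : Matrix n n R) (P : Matrix n m R) (z : n → R) (b : m → R) {s c : R}
    (hc : c * c = 2 * s) (hb : b ⬝ᵥ b = 1) (hz : (A - s • E) *ᵥ z = c • (P *ᵥ b)) :
    (P + c • (E * vecMulVec z b)) * (P + c • (E * vecMulVec z b))ᵀ
      = P * Pᵀ + (A * vecMulVec z z * Eᵀ + E * vecMulVec z z * Aᵀ) := by
  have hAz : A *ᵥ z = s • (E *ᵥ z) + c • (P *ᵥ b) := by
    rw [← hz, sub_mulVec, smul_mulVec]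
    abel
  have new_factor : (P + c • (E * vecMulVec z b)) * (P + c • (E * vecMulVec z b))ᵀ
      = P * Pᵀ + c • (vecMulVec (E *ᵥ z) (P *ᵥ b) + vecMulVec (P *ᵥ b) (E *ᵥ z))
        + (c * c) • vecMulVec (E *ᵥ z) (E *ᵥ z) := by
    simp only [mul_vecMulVec E, transpose_add, transpose_smul, transpose_vecMulVec, Matrix.add_mul,
      Matrix.mul_add, Matrix.smul_mul, Matrix.mul_smul, vecMulVec_mul_vecMulVec, hb, one_smul]
    simp only [mul_vecMulVec, vecMulVec_mul, vecMul_transpose]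
    module
  have residual_increment : A * vecMulVec z z * Eᵀ + E * vecMulVec z z * Aᵀ
      = c • (vecMulVec (E *ᵥ z) (P *ᵥ b) + vecMulVec (P *ᵥ b) (E *ᵥ z))
        + (2 * s) • vecMulVec (E *ᵥ z) (E *ᵥ z) := by
    simp only [mul_vecMulVec, vecMulVec_mul, vecMul_transpose]
    simp only [hAz, add_vecMulVec, vecMulVec_add, smul_vecMulVec, vecMulVec_smul]
    module
  rw [new_factor, residual_increment, hc, add_assoc]

/-- Tangential low-rank ADI iteration with real shifts (Theorem 4):
the final residual factor `B⊥,k` factorizes the Lyapunov residual of `Z Zᵀ`. -/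
theorem tangential_adi_real_shifts
    {n m k : ℕ}
    (A E : Matrix (Fin n) (Fin n) ℝ) (B : Matrix (Fin n) (Fin m) ℝ)
    (s : Fin k → ℝ) (hs : ∀ i, 0 < s i)
    (b : Fin k → Fin m → ℝ) (hb : ∀ i, ∑ j, (b i j) ^ 2 = 1)
    (hinv : ∀ i, IsUnit (A - s i • E).det)
    (z : Fin k → Fin n → ℝ)
    (Bp : Fin (k + 1) → Matrix (Fin n) (Fin m) ℝ)
    (hBp0 : Bp 0 = B)
    (hz : ∀ i : Fin k,
      z i = Real.sqrt (2 * s i) • ((A - s i • E)⁻¹ *ᵥ (Bp i.castSucc *ᵥ b i)))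
    (hBp : ∀ i : Fin k,
      Bp i.succ = Bp i.castSucc + Real.sqrt (2 * s i) • (E * vecMulVec (z i) (b i)))
    (Z : Matrix (Fin n) (Fin k) ℝ) (hZ : ∀ r c, Z r c = z c r) :
    A * (Z * Zᵀ) * Eᵀ + E * (Z * Zᵀ) * Aᵀ + B * Bᵀ
      = Bp (Fin.last k) * (Bp (Fin.last k))ᵀ := by
  have hZZ : Z * Zᵀ = ∑ i, vecMulVec (z i) (z i) := by
    have hcol (i : Fin k) : Z.col i = z i := funext fun r => hZ r i
    simp only [mul_transpose_eq_sum_vecMulVec_col, hcol]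
  have step (i : Fin k) : Bp i.succ * (Bp i.succ)ᵀ - Bp i.castSucc * (Bp i.castSucc)ᵀ
      = A * vecMulVec (z i) (z i) * Eᵀ + E * vecMulVec (z i) (z i) * Aᵀ := by
    have hshift : (A - s i • E) *ᵥ z i = √(2 * s i) • (Bp i.castSucc *ᵥ b i) := by
      rw [hz i, mulVec_smul, mulVec_mulVec, mul_nonsing_inv _ (hinv i), one_mulVec]
    have hbb : b i ⬝ᵥ b i = 1 := by simpa [dotProduct, sq] using hb i
    rw [hBp i, tangential_adi_residual_factor_step A E _ (z i) (b i)
      (Real.mul_self_sqrt (by linarith [hs i])) hbb hshift, add_sub_cancel_left]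
  rw [hZZ, Finset.mul_sum, Finset.sum_mul, Finset.mul_sum, Finset.sum_mul,
    ← Finset.sum_add_distrib, ← Finset.sum_congr rfl fun i _ => step i,
    Fin.sum_univ_succ_sub_castSucc (fun j => Bp j * (Bp j)ᵀ), hBp0]
  abel
end

section
/- Let A, E ∈ ℝ^{n×n}, B ∈ ℝ^{n×m}. For i = 1, …, k let s_i ∈ ℂ with Re(s_i) > 0 and Im(s_i) ≠ 0, let b_i ∈ ℂ^m with ‖b_i‖_2 = 1, and assume A − s_i E is invertible. Define B_{⊥,0} = B and, for i = 1, …, k: y_i = √(2 Re(s_i)) (A − s_i E)^{-1} B_{⊥,i−1} b_i, α_i = (b_i^H b̄_i)·Re(s_i)/s̄_i, β_i = 1/√(1 − α_i ᾱ_i), Z_i = [y_i, β_i(ȳ_i − α_i y_i)] ∈ ℂ^{n×2}, L_i = √(2 Re(s_i))·[b_i, β_i(b̄_i − α_i b_i)] ∈ ℂ^{m×2}, and B_{⊥,i} = B_{⊥,i−1} + E Z_i L_i^H. Then every B_{⊥,i} is a real matrix, Z Z^H is real symmetric for Z = [Z_1, …, Z_k], and the residual factorization A (Z Z^H) Eᵀ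 + E (Z Z^H) Aᵀ + B Bᵀ = B_{⊥,k} B_{⊥,k}ᵀ holds. -/
/-!
Both factors of a step have the shape `[x, β(x̄ − αx)]` (`adiPair α β x`): `Zᵢ` with `x = yᵢ`
and `Lᵢ` with `x = √(2 Re sᵢ) bᵢ`. Since `A`, `E` and `B⊥,i−1` are real, the defining equation
`(A − sᵢE) yᵢ = B⊥,i−1 √(2 Re sᵢ) bᵢ` and its complex conjugate combine into the Sylvester-type
relation `A Zᵢ = E Zᵢ Sᵢ + B⊥,i−1 Lᵢ` with the upper triangular
`Sᵢ = [[sᵢ, αᵢβᵢ(s̄ᵢ − sᵢ)], [0, s̄ᵢ]]` (`adiShift`), and the choice of `αᵢ`, `βᵢ` is exactly what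
makes `Lᵢᴴ Lᵢ = Sᵢ + Sᵢᴴ`. These two relations alone show that adding the Lyapunov operator
applied to `Zᵢ Zᵢᴴ` to `B⊥,i−1 B⊥,i−1ᴴ` gives `B⊥,i B⊥,iᴴ`, and the steps telescope.

Realness comes from a single identity: `[x, β(x̄ − αx)] [v, β(v̄ − αv)]ᴴ` is real as soon as
`β²(1 − |α|²) = 1`, and both `Zᵢ Zᵢᴴ` and `E Zᵢ Lᵢᴴ` have this form. Here `β` is well defined
because `|αᵢ| ≤ Re sᵢ / |sᵢ| < 1`.
-/

open Matrix Complex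

section Residual

variable {R N M P : Type*} [Ring R] [StarRing R] [Fintype N] [Fintype M] [Fintype P]

theorem lyapunov_residual_update (A E : Matrix N N R) (Bp : Matrix N M R) (V : Matrix N P R)
    (L : Matrix M P R) (S : Matrix P P R) (hV : A * V = E * V * S + Bp * L)
    (hL : Lᴴ * L = S + Sᴴ) :
    A * (V * Vᴴ) * Eᴴ + E * (V * Vᴴ) * Aᴴ + Bp * Bpᴴ
      = (Bp + E * V * Lᴴ) * (Bp + E * V * Lᴴ)ᴴ := by
  calc A * (V * Vᴴ) * Eᴴ + E * (V * Vᴴ) * Aᴴ + Bp * Bpᴴ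
      = (A * V) * (E * V)ᴴ + (E * V) * (A * V)ᴴ + Bp * Bpᴴ := by
        simp only [conjTranspose_mul, Matrix.mul_assoc]
    _ = (Bp + E * V * Lᴴ) * (Bp + E * V * Lᴴ)ᴴ := by
        rw [hV]
        simp only [conjTranspose_add, conjTranspose_mul, conjTranspose_conjTranspose,
          Matrix.add_mul, Matrix.mul_add, Matrix.mul_assoc]
        rw [← Matrix.mul_assoc Lᴴ L, hL]
        simp only [Matrix.add_mul, Matrix.mul_add]
        abel

theorem lyapunov_residual_sum {k : ℕ} (A E : Matrix N N R) (X : Fin k → Matrix N N R)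
    (Bp : Fin (k + 1) → Matrix N M R)
    (h : ∀ i, A * X i * Eᴴ + E * X i * Aᴴ + Bp i.castSucc * (Bp i.castSucc)ᴴ
      = Bp i.succ * (Bp i.succ)ᴴ) :
    A * (∑ i, X i) * Eᴴ + E * (∑ i, X i) * Aᴴ + Bp 0 * (Bp 0)ᴴ
      = Bp (Fin.last k) * (Bp (Fin.last k))ᴴ := by
  induction k with
  | zero => simp
  | succ k ih =>
    have := ih (fun i => X i.castSucc) (fun i => Bp i.castSucc) fun i => h i.castSucc
    rw [← Fin.succ_last, ← h, ← this, Fin.sum_univ_castSucc, Fin.castSucc_zero]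
    simp only [Matrix.mul_add, Matrix.add_mul]
    abel

end Residual

theorem mul_conjTranspose_eq_sum_blocks {R N K Q : Type*} [Semiring R] [StarRing R]
    [Fintype K] [Fintype Q] (Zblk : K → Matrix N Q R) {Z : Matrix N (K × Q) R}
    (hZ : ∀ r p, Z r p = Zblk p.1 r p.2) :
    Z * Zᴴ = ∑ i, Zblk i * (Zblk i)ᴴ := by
  ext r c
  simp only [mul_apply, conjTranspose_apply, hZ, Matrix.sum_apply]
  exact Fintype.sum_prod_type _

section RealMatrix

variable {ι κ : Type*}

theorem map_ofReal_map_conj (M : Matrix ι κ ℝ) :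
    (M.map ofReal).map (starRingEnd ℂ) = M.map ofReal := by
  ext; simp

theorem im_eq_zero_of_map_conj {M : Matrix ι κ ℂ}
    (hM : M.map (starRingEnd ℂ) = M) (r : ι) (c : κ) : (M r c).im = 0 :=
  conj_eq_iff_im.mp (congrFun₂ hM r c)

theorem conjTranspose_eq_transpose_of_map_conj {M : Matrix ι κ ℂ}
    (hM : M.map (starRingEnd ℂ) = M) : Mᴴ = Mᵀ := by
  rw [conjTranspose, transpose_map]; exact congrArg transpose hM

theorem star_mulVec_of_map_conj [Fintype κ] {M : Matrix ι κ ℂ}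
    (hM : M.map (starRingEnd ℂ) = M) (x : κ → ℂ) : star (M *ᵥ x) = M *ᵥ star x := by
  funext r
  conv_rhs => rw [← hM]
  exact RingHom.map_mulVec (starRingEnd ℂ) M x r

end RealMatrix

section AdiPair

variable {ι κ : Type*}

def adiPair (α : ℂ) (β : ℝ) (x : ι → ℂ) : Matrix ι (Fin 2) ℂ :=
  of fun r => ![x r, β * (star (x r) - α * x r)]

def adiShift (s α : ℂ) (β : ℝ) : Matrix (Fin 2) (Fin 2) ℂ :=
  !![s, α * β * (star s - s); 0, star s]

theorem mul_adiPair_of_map_conj [Fintype κ] {M : Matrix ι κ ℂ}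
    (hM : M.map (starRingEnd ℂ) = M) (α : ℂ) (β : ℝ) (x : κ → ℂ) :
    M * adiPair α β x = adiPair α β (M *ᵥ x) := by
  have hcol : M *ᵥ ((β : ℂ) • (star x - α • x))
      = (β : ℂ) • (star (M *ᵥ x) - α • (M *ᵥ x)) := by
    rw [star_mulVec_of_map_conj hM, mulVec_smul, mulVec_sub, mulVec_smul]
  ext r j
  fin_cases j
  · rfl
  · exact congrFun hcol r

theorem adiPair_ofReal_smul (α : ℂ) (β c : ℝ) (x : ι → ℂ) :
    adiPair α β ((c : ℂ) • x) = of fun r => ![c * x r, c * (β * (star (x r) - α * x r))] := by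
  ext r j
  fin_cases j <;> simp [adiPair]
  ring

theorem adiPair_smul_add (s α : ℂ) (β : ℝ) (p q : ι → ℂ) :
    adiPair α β (s • p + q) = adiPair α β p * adiShift s α β + adiPair α β q := by
  ext r j
  fin_cases j <;> simp [adiPair, adiShift, mul_apply, Fin.sum_univ_two] <;> ring

theorem ofReal_sq_mul_one_sub_conj_mul_self {α : ℂ} {β : ℝ}
    (hβ : β ^ 2 * (1 - normSq α) = 1) : (β : ℂ) ^ 2 * (1 - starRingEnd ℂ α * α) = 1 := by
  rw [← normSq_eq_conj_mul_self]
  exact_mod_cast hβ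

theorem adiPair_mul_conjTranspose_map_conj {α : ℂ} {β : ℝ}
    (hβ : β ^ 2 * (1 - normSq α) = 1) (x : ι → ℂ) (v : κ → ℂ) :
    (adiPair α β x * (adiPair α β v)ᴴ).map (starRingEnd ℂ)
      = adiPair α β x * (adiPair α β v)ᴴ := by
  ext r t
  simp [adiPair, mul_apply, Fin.sum_univ_two]
  linear_combination (x r * starRingEnd ℂ (v t) - starRingEnd ℂ (x r) * v t)
    * ofReal_sq_mul_one_sub_conj_mul_self hβ

theorem conjTranspose_adiPair_mul_self [Fintype ι] {s α : ℂ} {β : ℝ}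
    (hβ : β ^ 2 * (1 - normSq α) = 1) {l : ι → ℂ}
    (hν : star l ⬝ᵥ l = s + star s) (hτ : star l ⬝ᵥ star l = 2 * α * star s) :
    (adiPair α β l)ᴴ * adiPair α β l = adiShift s α β + (adiShift s α β)ᴴ := by
  have hν' : l ⬝ᵥ star l = s + star s := by rw [dotProduct_comm, hν]
  have hτ' : l ⬝ᵥ l = 2 * star α * s := by
    rw [star_dotProduct_star] at hτ
    rw [← star_star (l ⬝ᵥ l), hτ]
    simp [mul_comm]
  set w : ι → ℂ := (β : ℂ) • (star l - α • l)
  have hgram : (adiPair α β l)ᴴ * adiPair α β l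
      = of fun i j => star (![l, w] i) ⬝ᵥ ![l, w] j := by
    ext i j
    fin_cases i <;> fin_cases j <;> rfl
  rw [hgram]
  ext i j
  fin_cases i <;> fin_cases j <;>
    simp [w, adiShift, star_smul, dotProduct_sub, sub_dotProduct, dotProduct_smul,
      smul_dotProduct, hν, hτ, hν', hτ']
  · ring
  · ring
  · linear_combination (s + starRingEnd ℂ s) * ofReal_sq_mul_one_sub_conj_mul_self hβ

end AdiPair

section Scalars

variable {κ : Type*} [Fintype κ]

theorem norm_sum_conj_sq_le (b : κ → ℂ) :
    ‖∑ j, starRingEnd ℂ (b j) ^ 2‖ ≤ ∑ j, normSq (b j) :=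
  (norm_sum_le _ _).trans_eq <| Finset.sum_congr rfl fun j _ => by
    rw [norm_pow, norm_conj, Complex.sq_norm]

theorem normSq_re_div_conj_lt_one {s : ℂ} (him : s.im ≠ 0) : normSq (s.re / star s) < 1 := by
  have hpos : 0 < s.im * s.im := mul_self_pos.mpr him
  rw [normSq_div, normSq_ofReal, star_def, normSq_conj, normSq_apply,
    div_lt_one (by nlinarith [mul_self_nonneg s.re])]
  linarith

theorem normSq_sum_conj_sq_mul_re_div_conj_lt_one {s : ℂ} (him : s.im ≠ 0) {b : κ → ℂ}
    (hb : ∑ j, normSq (b j) = 1) :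
    normSq ((∑ j, starRingEnd ℂ (b j) ^ 2) * (s.re / star s)) < 1 := by
  have hσ : normSq (∑ j, starRingEnd ℂ (b j) ^ 2) ≤ 1 := by
    have := norm_sum_conj_sq_le b
    rw [hb] at this
    rw [← Complex.sq_norm]
    nlinarith [norm_nonneg (∑ j, starRingEnd ℂ (b j) ^ 2)]
  rw [map_mul]
  nlinarith [normSq_nonneg (s.re / star s : ℂ), normSq_re_div_conj_lt_one him]

theorem inv_sqrt_one_sub_sq_mul {x : ℝ} (hx : x < 1) :
    (Real.sqrt (1 - x))⁻¹ ^ 2 * (1 - x) = 1 := by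
  rw [inv_pow, Real.sq_sqrt (by linarith), inv_mul_cancel₀ (by linarith)]

theorem star_sqrt_two_re_smul_dotProduct_self {s : ℂ} (hs : 0 < s.re) {b : κ → ℂ}
    (hb : ∑ j, normSq (b j) = 1) :
    star ((Real.sqrt (2 * s.re) : ℂ) • b) ⬝ᵥ ((Real.sqrt (2 * s.re) : ℂ) • b) = s + star s := by
  have hbb : star b ⬝ᵥ b = 1 := by
    simp only [dotProduct, Pi.star_apply, star_def, ← normSq_eq_conj_mul_self]
    exact_mod_cast hb
  rw [star_smul, smul_dotProduct, dotProduct_smul, hbb, star_def, add_conj, conj_ofReal,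
    smul_eq_mul, smul_eq_mul, mul_one, ← ofReal_mul, Real.mul_self_sqrt (by positivity)]

theorem star_sqrt_two_re_smul_dotProduct_star {s : ℂ} (hs : 0 < s.re) (b : κ → ℂ) :
    star ((Real.sqrt (2 * s.re) : ℂ) • b) ⬝ᵥ star ((Real.sqrt (2 * s.re) : ℂ) • b)
      = 2 * ((∑ j, starRingEnd ℂ (b j) ^ 2) * (s.re / star s)) * star s := by
  have hs0 : starRingEnd ℂ s ≠ 0 := (map_ne_zero _).mpr fun h => by simp [h] at hs
  have hbb : star b ⬝ᵥ star b = ∑ j, starRingEnd ℂ (b j) ^ 2 := by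
    simp only [dotProduct, Pi.star_apply, star_def, sq]
  rw [star_smul, smul_dotProduct, dotProduct_smul, hbb, star_def, conj_ofReal,
    smul_eq_mul, smul_eq_mul, ← mul_assoc, ← ofReal_mul, Real.mul_self_sqrt (by positivity)]
  push_cast
  field_simp

end Scalars

theorem lyapunov_residual_adiPair {ι κ : Type*} [Fintype ι] [Fintype κ]
    {A E : Matrix ι ι ℂ} {Bp : Matrix ι κ ℂ} (hA : A.map (starRingEnd ℂ) = A)
    (hE : E.map (starRingEnd ℂ) = E) (hBp : Bp.map (starRingEnd ℂ) = Bp)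
    {s α : ℂ} {β : ℝ} (hβ : β ^ 2 * (1 - normSq α) = 1) {l : κ → ℂ}
    (hν : star l ⬝ᵥ l = s + star s) (hτ : star l ⬝ᵥ star l = 2 * α * star s)
    {u : ι → ℂ} (hu : (A - s • E) *ᵥ u = Bp *ᵥ l) :
    A * (adiPair α β u * (adiPair α β u)ᴴ) * Eᴴ + E * (adiPair α β u * (adiPair α β u)ᴴ) * Aᴴ
        + Bp * Bpᴴ
      = (Bp + E * adiPair α β u * (adiPair α β l)ᴴ)
          * (Bp + E * adiPair α β u * (adiPair α β l)ᴴ)ᴴ := by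
  have hAu : A *ᵥ u = s • (E *ᵥ u) + Bp *ᵥ l := by
    rw [← hu, sub_mulVec, smul_mulVec]
    abel
  refine lyapunov_residual_update A E Bp _ _ (adiShift s α β) ?_
    (conjTranspose_adiPair_mul_self hβ hν hτ)
  rw [mul_adiPair_of_map_conj hA, hAu, adiPair_smul_add, mul_adiPair_of_map_conj hE,
    mul_adiPair_of_map_conj hBp]

/-- Tangential low-rank ADI iteration for complex conjugated shift pairs
(Theorem 5): every residual factor `B⊥,i` is real, `Z Zᴴ` is real symmetric,
and the Lyapunov residual of `Z Zᴴ` factorizes as `B⊥,k B⊥,kᵀ`. -/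
theorem tangential_adi_complex_shifts
    {n m k : ℕ}
    (A E : Matrix (Fin n) (Fin n) ℝ) (B : Matrix (Fin n) (Fin m) ℝ)
    (Ac Ec : Matrix (Fin n) (Fin n) ℂ) (Bc : Matrix (Fin n) (Fin m) ℂ)
    (hAc : Ac = A.map Complex.ofReal) (hEc : Ec = E.map Complex.ofReal)
    (hBc : Bc = B.map Complex.ofReal)
    (s : Fin k → ℂ) (hs : ∀ i, 0 < (s i).re) (him : ∀ i, (s i).im ≠ 0)
    (b : Fin k → Fin m → ℂ) (hb : ∀ i, ∑ j, Complex.normSq (b i j) = 1)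
    (hinv : ∀ i, IsUnit (Ac - s i • Ec).det)
    (y : Fin k → Fin n → ℂ)
    (α : Fin k → ℂ) (β : Fin k → ℝ)
    (Zblk : Fin k → Matrix (Fin n) (Fin 2) ℂ)
    (Lblk : Fin k → Matrix (Fin m) (Fin 2) ℂ)
    (Bp : Fin (k + 1) → Matrix (Fin n) (Fin m) ℂ)
    (hBp0 : Bp 0 = Bc)
    (hy : ∀ i, y i = (Real.sqrt (2 * (s i).re) : ℂ) •
        ((Ac - s i • Ec)⁻¹ *ᵥ (Bp i.castSucc *ᵥ b i)))
    -- αᵢ = (bᵢᴴ b̄ᵢ)·Re(sᵢ)/s̄ᵢ ;  βᵢ = 1/√(1 − αᵢ ᾱᵢ)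
    (hα : ∀ i, α i = (∑ j, (starRingEnd ℂ (b i j)) ^ 2)
        * (((s i).re : ℂ) / star (s i)))
    (hβ : ∀ i, β i = (Real.sqrt (1 - Complex.normSq (α i)))⁻¹)
    -- Zᵢ = [yᵢ, βᵢ(ȳᵢ − αᵢ yᵢ)]
    (hZblk : ∀ i, Zblk i
      = Matrix.of fun r => ![y i r, (β i : ℂ) * (star (y i r) - α i * y i r)])
    -- Lᵢ = √(2 Re sᵢ)·[bᵢ, βᵢ(b̄ᵢ − αᵢ bᵢ)]
    (hLblk : ∀ i, Lblk i
      = Matrix.of fun j => ![(Real.sqrt (2 * (s i).re) : ℂ) * b i j,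
          (Real.sqrt (2 * (s i).re) : ℂ)
            * ((β i : ℂ) * (star (b i j) - α i * b i j))])
    (hBpsucc : ∀ i : Fin k,
      Bp i.succ = Bp i.castSucc + Ec * Zblk i * (Lblk i)ᴴ)
    -- the concatenated low-rank factor Z = [Z₁, …, Z_k]
    (Z : Matrix (Fin n) (Fin k × Fin 2) ℂ)
    (hZ : ∀ r p, Z r p = Zblk p.1 r p.2) :
    (∀ i r c, (Bp i r c).im = 0)
      ∧ (∀ r c, ((Z * Zᴴ) r c).im = 0)
      ∧ (Z * Zᴴ)ᴴ = Z * Zᴴ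
      ∧ Ac * (Z * Zᴴ) * Ecᵀ + Ec * (Z * Zᴴ) * Acᵀ + Bc * Bcᵀ
          = Bp (Fin.last k) * (Bp (Fin.last k))ᵀ := by
  have hA := hAc ▸ map_ofReal_map_conj A
  have hE := hEc ▸ map_ofReal_map_conj E
  have hB := hBc ▸ map_ofReal_map_conj B
  set l : Fin k → Fin m → ℂ := fun i => (Real.sqrt (2 * (s i).re) : ℂ) • b i
  have hβsq : ∀ i, β i ^ 2 * (1 - normSq (α i)) = 1 := fun i => by
    rw [hβ, hα]
    exact inv_sqrt_one_sub_sq_mul (normSq_sum_conj_sq_mul_re_div_conj_lt_one (him i) (hb i))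
  have hZpair : ∀ i, Zblk i = adiPair (α i) (β i) (y i) := hZblk
  have hLpair : ∀ i, Lblk i = adiPair (α i) (β i) (l i) := fun i => by
    rw [hLblk, adiPair_ofReal_smul]
  have hZZreal : ∀ i, (Zblk i * (Zblk i)ᴴ).map (starRingEnd ℂ) = Zblk i * (Zblk i)ᴴ :=
    fun i => hZpair i ▸ adiPair_mul_conjTranspose_map_conj (hβsq i) _ _
  have hBpreal : ∀ i, (Bp i).map (starRingEnd ℂ) = Bp i := by
    intro i
    induction i using Fin.induction with
    | zero => rw [hBp0, hB]
    | succ i ih =>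
      rw [hBpsucc, hZpair, hLpair, mul_adiPair_of_map_conj hE, Matrix.map_add _ (map_add _), ih,
        adiPair_mul_conjTranspose_map_conj (hβsq i)]
  have hstep : ∀ i : Fin k, Ac * (Zblk i * (Zblk i)ᴴ) * Ecᴴ + Ec * (Zblk i * (Zblk i)ᴴ) * Acᴴ
      + Bp i.castSucc * (Bp i.castSucc)ᴴ = Bp i.succ * (Bp i.succ)ᴴ := fun i => by
    have hu : (Ac - s i • Ec) *ᵥ y i = Bp i.castSucc *ᵥ l i := by
      rw [hy, mulVec_smul, mulVec_mulVec, mul_nonsing_inv _ (hinv i), one_mulVec,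
        ← mulVec_smul]
    rw [hBpsucc, hZpair, hLpair]
    exact lyapunov_residual_adiPair hA hE (hBpreal _) (hβsq i)
      (star_sqrt_two_re_smul_dotProduct_self (hs i) (hb i))
      (hα i ▸ star_sqrt_two_re_smul_dotProduct_star (hs i) (b i)) hu
  have hZsum := mul_conjTranspose_eq_sum_blocks Zblk hZ
  refine ⟨fun i => im_eq_zero_of_map_conj (hBpreal i), fun r c => ?_,
    isHermitian_mul_conjTranspose_self Z, ?_⟩
  · rw [hZsum, Matrix.sum_apply, im_sum]
    exact Finset.sum_eq_zero fun i _ => im_eq_zero_of_map_conj (hZZreal i) r c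
  · rw [← conjTranspose_eq_transpose_of_map_conj hA,
      ← conjTranspose_eq_transpose_of_map_conj hE, ← conjTranspose_eq_transpose_of_map_conj hB,
      ← conjTranspose_eq_transpose_of_map_conj (hBpreal _), ← hBp0, hZsum]
    exact lyapunov_residual_sum Ac Ec _ Bp hstep
end

section
/- Let A, E ∈ ℝ^{n×n}, B ∈ ℝ^{n×m}. For i = 1, …, k let s_i ∈ ℂ with Re(s_i) > 0 and Im(s_i) ≠ 0, let b_i ∈ ℂ^m with ‖b_i‖_2 = 1, and assume A − s_i E is invertible. Define B_{⊥,0} = B and, for i = 1, …, k: y_i = √(2 Re(s_i)) (A − s_i E)^{-1} B_{⊥,i−1} b_i, α_i = (b_i^H b̄_i)·Re(s_i)/s̄_i, β_i = 1/√(1 − α_i ᾱ_i), γ_i = √(1 + Re(α_i)), the real block Z_i = (√2/γ_i)·[Re(y_i), β_i(Im(α_i)·Re(y_i) + γ_i²·Im(y_i))] ∈ ℝ^{n×2}, and B_{⊥,i} = B_{⊥,i−1} + (2/γ_i)·√(Re(s_i))·E Z_i [Re(b_i), β_i(Im(α_i)·Re(b_i) + γ_i²·Im(b_i))]ᵀ.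 Then all iterates Z_i and B_{⊥,i} are real, each Z_i Z_iᵀ equals the block Z_i^c (Z_i^c)^H produced by the complex formulation Z_i^c = [y_i, β_i(ȳ_i − α_i y_i)] (so the two formulations produce the same approximation and the same B_{⊥,i}), and the residual factorization A (Z Zᵀ) Eᵀ + E (Z Zᵀ) Aᵀ + B Bᵀ = B_{⊥,k} B_{⊥,k}ᵀ holds for Z = [Z_1, …, Z_k]. -/
open Matrix Complex ComplexConjugate

/-!
Put `Y = conjPair y = [y, ȳ]` and `c = √(2 Re s)`. The complex factors of one step are
`Z^c = Y T` and `L = c [b, b̄] T` with `T = mixing α β`. Because `A`, `E` and `B_{⊥,i-1}` are real,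
the shifted solve and its conjugate give the Sylvester relation `A Y - E Y S = B_{⊥,i-1} c [b, b̄]`
with `S = shiftPair s = diag(s, s̄)`. The choice of `α` is exactly what makes
`c² [b, b̄]ᴴ [b, b̄] = Sᴴ J + J S` for `J = mixingGram α`, and the choice of `β` makes
`J = (T Tᴴ)⁻¹`. Together they show that the update of `B_⊥` changes `B_⊥ B_⊥ᴴ` by exactly
`A Z^c Z^cᴴ Eᴴ + E Z^c Z^cᴴ Aᴴ`, so the residual formula telescopes.

On the real side, `Y R` with `R = realifier α β` is the real block
`[Re y, β (Im α Re y + γ² Im y)]` (as `γ² = 1 + Re α`), and `R Rᴴ = ((1 + Re α) / 2) T Tᴴ`.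
Real and complex blocks therefore have proportional Gram products, which gives both
`Z_i Z_iᵀ = Z_i^c Z_i^cᴴ` and the agreement of the two recursions for `B_⊥`.
-/

theorem map_ofReal_mul {l m n : Type*} [Fintype m] (M : Matrix l m ℝ) (N : Matrix m n ℝ) :
    (M * N).map ofReal = M.map ofReal * N.map ofReal :=
  Matrix.map_mul (f := ofRealHom)

theorem map_ofReal_smul {m n : Type*} (r : ℝ) (M : Matrix m n ℝ) :
    (r • M).map ofReal = (r : ℂ) • M.map ofReal := by
  ext; simp

theorem map_ofReal_transpose {m n : Type*} (M : Matrix m n ℝ) :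
    Mᵀ.map ofReal = (M.map ofReal)ᴴ := by
  ext; simp

theorem map_ofReal_mul_transpose_of_blocks {n ι p : Type*} [Fintype ι] [Fintype p]
    {Zr : ι → Matrix n p ℝ} {Z : Matrix n (ι × p) ℝ} (hZ : ∀ r q, Z r q = Zr q.1 r q.2) :
    (Z * Zᵀ).map ofReal = ∑ i, (Zr i).map ofReal * ((Zr i).map ofReal)ᴴ := by
  ext r r'
  simp [Matrix.mul_apply, Matrix.sum_apply, hZ, Fintype.sum_prod_type]

theorem eq_zero_add_sum_of_succ {M : Type*} [AddCommMonoid M] {k : ℕ}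
    {f : Fin (k + 1) → M} {g : Fin k → M} (h : ∀ i, f i.succ = f i.castSucc + g i) :
    f (Fin.last k) = f 0 + ∑ i, g i := by
  induction k with
  | zero => simp
  | succ k ih =>
    have hlast : f (Fin.last k).castSucc = f 0 + ∑ i : Fin k, g i.castSucc := by
      simpa using ih (f := fun j => f j.castSucc) (fun i => h i.castSucc)
    rw [Fin.sum_univ_castSucc, ← add_assoc, ← hlast, ← h, Fin.succ_last]

theorem residual_factor_update {R : Type*} [CommRing R] [StarRing R]
    {n m p : Type*} [Fintype n] [Fintype m] [Fintype p] [DecidableEq p]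
    {A E : Matrix n n R} {W : Matrix n m R} {Y : Matrix n p R} {V : Matrix m p R}
    {S J K : Matrix p p R}
    (hsyl : A * Y - E * Y * S = W * V) (hgram : Vᴴ * V = Sᴴ * J + J * S)
    (hK : Kᴴ = K) (hKJ : K * J = 1) :
    (W + E * Y * K * Vᴴ) * (W + E * Y * K * Vᴴ)ᴴ
      = W * Wᴴ + (A * (Y * K * Yᴴ) * Eᴴ + E * (Y * K * Yᴴ) * Aᴴ) := by
  have hJK : J * K = 1 := mul_eq_one_comm.mp hKJ
  have hVW : Vᴴ * Wᴴ = Yᴴ * Aᴴ - Sᴴ * Yᴴ * Eᴴ := by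
    rw [← conjTranspose_mul, ← hsyl]; simp [conjTranspose_mul, Matrix.mul_assoc]
  have hmid : K * (Vᴴ * V) * K = K * Sᴴ + S * K := by
    rw [hgram, Matrix.mul_add, Matrix.add_mul, ← Matrix.mul_assoc K J, hKJ,
      Matrix.mul_assoc, Matrix.mul_assoc, hJK]
    simp
  calc (W + E * Y * K * Vᴴ) * (W + E * Y * K * Vᴴ)ᴴ
      = W * Wᴴ + E * Y * K * (Vᴴ * Wᴴ) + W * V * K * Yᴴ * Eᴴ
          + E * Y * (K * (Vᴴ * V) * K) * Yᴴ * Eᴴ := by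
        simp only [conjTranspose_add, conjTranspose_mul, conjTranspose_conjTranspose, hK,
          Matrix.add_mul, Matrix.mul_add, Matrix.mul_assoc]
        abel
    _ = _ := by
        rw [hVW, ← hsyl, hmid]
        simp only [Matrix.mul_sub, Matrix.sub_mul, Matrix.mul_add, Matrix.add_mul,
          Matrix.mul_assoc]
        abel

theorem residual_factor_telescope {R : Type*} [Semiring R] [Star R] {n m : Type*}
    [Fintype n] [Fintype m] {k : ℕ} (A E : Matrix n n R) {W : Fin (k + 1) → Matrix n m R}
    {P : Fin k → Matrix n n R}
    (h : ∀ i, W i.succ * (W i.succ)ᴴ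
      = W i.castSucc * (W i.castSucc)ᴴ + (A * P i * Eᴴ + E * P i * Aᴴ)) :
    A * (∑ i, P i) * Eᴴ + E * (∑ i, P i) * Aᴴ + W 0 * (W 0)ᴴ
      = W (Fin.last k) * (W (Fin.last k))ᴴ := by
  rw [eq_zero_add_sum_of_succ (f := fun i => W i * (W i)ᴴ) h, Matrix.mul_sum, Matrix.sum_mul,
    Matrix.mul_sum, Matrix.sum_mul, ← Finset.sum_add_distrib, add_comm]

def conjPair {ι : Type*} (u : ι → ℂ) : Matrix ι (Fin 2) ℂ :=
  of fun r => ![u r, star (u r)]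

def shiftPair (s : ℂ) : Matrix (Fin 2) (Fin 2) ℂ :=
  diagonal ![s, star s]

def mixing (α : ℂ) (β : ℝ) : Matrix (Fin 2) (Fin 2) ℂ :=
  !![1, -(β * α); 0, β]

def mixingGram (α : ℂ) : Matrix (Fin 2) (Fin 2) ℂ :=
  !![1, α; star α, 1]

noncomputable def realifier (α : ℂ) (β : ℝ) : Matrix (Fin 2) (Fin 2) ℂ :=
  !![1 / 2, -(I * β * (1 + α)) / 2; 1 / 2, I * β * (1 + star α) / 2]

def realBlock {ι : Type*} (α : ℂ) (β γ : ℝ) (u : ι → ℂ) : Matrix ι (Fin 2) ℝ :=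
  of fun r => ![(u r).re, β * (α.im * (u r).re + γ ^ 2 * (u r).im)]

theorem conjPair_mul_mixing {ι : Type*} (u : ι → ℂ) (α : ℂ) (β : ℝ) :
    conjPair u * mixing α β = of fun r => ![u r, β * (star (u r) - α * u r)] := by
  ext r j
  fin_cases j <;> simp [conjPair, mixing, Matrix.mul_apply, Fin.sum_univ_two]; ring

theorem mixing_mul_conjTranspose_mul_mixingGram {α : ℂ} {β : ℝ}
    (hβ : β ^ 2 * (1 - normSq α) = 1) :
    mixing α β * (mixing α β)ᴴ * mixingGram α = 1 := by
  have hβc : (β : ℂ) ^ 2 * (1 - α * conj α) = 1 := by rw [mul_conj]; exact_mod_cast hβ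
  ext i j
  fin_cases i <;> fin_cases j <;>
    simp [mixing, mixingGram, Matrix.mul_apply, -cons_mul, -cons_vecMul] <;>
    first | ring1 | linear_combination -α * hβc | linear_combination hβc

theorem conjPair_mul_realifier {ι : Type*} (u : ι → ℂ) {α : ℂ} (β : ℝ) {γ : ℝ}
    (hγ : γ ^ 2 = 1 + α.re) :
    conjPair u * realifier α β = (realBlock α β γ u).map ofReal := by
  ext r j
  fin_cases j <;> simp [conjPair, realifier, realBlock, Matrix.mul_apply] <;>
    apply Complex.ext <;> simp [← ofReal_pow, hγ] <;> ring

theorem realifier_mul_conjTranspose {α : ℂ} {β : ℝ} (hβ : β ^ 2 * (1 - normSq α) = 1) :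
    realifier α β * (realifier α β)ᴴ
      = (((1 + α.re) / 2 : ℝ) : ℂ) • (mixing α β * (mixing α β)ᴴ) := by
  rw [normSq_apply] at hβ
  ext i j
  fin_cases i <;> fin_cases j <;>
    simp [mixing, realifier, Matrix.mul_apply, -cons_mul, -cons_vecMul, map_ofNat] <;>
    apply Complex.ext <;> simp [div_ofNat_re, div_ofNat_im] <;>
    first | ring1 | linear_combination (1 + 2 * α.re) / 4 * hβ | linear_combination -hβ / 4

theorem smul_conjPair_conjTranspose_mul_self {m : Type*} [Fintype m] {b : m → ℂ} {s α : ℂ}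
    {c : ℝ} (hs : s ≠ 0) (hc : c ^ 2 = 2 * s.re) (hb : ∑ j, normSq (b j) = 1)
    (hα : α = (∑ j, conj (b j) ^ 2) * (s.re / star s)) :
    ((c : ℂ) • conjPair b)ᴴ * ((c : ℂ) • conjPair b)
      = (shiftPair s)ᴴ * mixingGram α + mixingGram α * shiftPair s := by
  have hre : s + conj s = 2 * s.re := by rw [add_conj]; push_cast; ring
  have hc' : (c : ℂ) ^ 2 = s + conj s := by rw [hre]; exact_mod_cast hc
  have hb' : ∑ j, conj (b j) * b j = 1 := by
    simp_rw [← normSq_eq_conj_mul_self]; exact_mod_cast hb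
  have hb'' : ∑ j, b j * conj (b j) = 1 := by simpa only [mul_comm] using hb'
  have hα' : (∑ j, conj (b j) * conj (b j)) * s.re = α * conj s := by
    rw [hα, star_def]; simp_rw [sq]; field_simp [(map_ne_zero _).mpr hs]
  have hαc : (∑ j, b j * b j) * s.re = conj α * s := by
    simpa using congrArg conj hα'
  rw [conjTranspose_smul, Matrix.smul_mul, Matrix.mul_smul, smul_smul, star_def, conj_ofReal,
    ← sq, hc']
  ext i j
  fin_cases i <;> fin_cases j <;>
    simp [conjPair, shiftPair, mixingGram, Matrix.mul_apply, -cons_mul, -cons_vecMul]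
  · linear_combination (s + conj s) * hb'
  · linear_combination (∑ j, conj (b j) * conj (b j)) * hre + 2 * hα'
  · linear_combination (∑ j, b j * b j) * hre + 2 * hαc
  · linear_combination (s + conj s) * hb''

theorem conjPair_sylvester {n m : Type*} [Fintype n] [Fintype m] {A E : Matrix n n ℝ}
    {W : Matrix n m ℝ} {s : ℂ} {y : n → ℂ} {b : m → ℂ} {c : ℝ}
    (h : (A.map ofReal - s • E.map ofReal) *ᵥ y = (c : ℂ) • (W.map ofReal *ᵥ b)) :
    A.map ofReal * conjPair y - E.map ofReal * conjPair y * shiftPair s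
      = W.map ofReal * ((c : ℂ) • conjPair b) := by
  have hcol : ∀ r, ∑ q, (A r q : ℂ) * y q - s * ∑ q, (E r q : ℂ) * y q
      = c * ∑ j, (W r j : ℂ) * b j := by
    intro r
    simpa [mulVec, dotProduct, sub_mul, Finset.mul_sum, mul_assoc] using congrFun h r
  ext r j
  fin_cases j
  · simpa [conjPair, shiftPair, Matrix.mul_apply, Finset.mul_sum, mul_comm, mul_left_comm]
      using hcol r
  · simpa [conjPair, shiftPair, Matrix.mul_apply, Finset.mul_sum, Finset.sum_mul, mul_comm,
      mul_left_comm, mul_assoc] using congrArg conj (hcol r)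

theorem normSq_mul_re_div_star_lt_one {m : Type*} [Fintype m] {b : m → ℂ} {s : ℂ}
    (him : s.im ≠ 0) (hb : ∑ j, normSq (b j) = 1) :
    normSq ((∑ j, conj (b j) ^ 2) * (s.re / star s)) < 1 := by
  have hsum : ‖∑ j, conj (b j) ^ 2‖ ≤ 1 :=
    (norm_sum_le _ _).trans_eq (by simpa [Complex.sq_norm] using hb)
  have hs : s ≠ 0 := fun h => him (by simp [h])
  have hquot : ‖(s.re : ℂ) / star s‖ < 1 := by
    rw [norm_div, norm_real, star_def, norm_conj, Real.norm_eq_abs,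
      div_lt_one (norm_pos_iff.mpr hs)]
    exact abs_re_lt_norm.mpr him
  have hnorm : ‖(∑ j, conj (b j) ^ 2) * (s.re / star s)‖ < 1 := by
    rw [norm_mul]
    exact mul_lt_one_of_nonneg_of_lt_one_right hsum (norm_nonneg _) hquot
  rw [normSq_eq_norm_sq]
  exact pow_lt_one₀ (norm_nonneg _) hnorm two_ne_zero

theorem adi_parameter_identities {m : Type*} [Fintype m] {b : m → ℂ} {s α : ℂ} {β γ : ℝ}
    (him : s.im ≠ 0) (hb : ∑ j, normSq (b j) = 1)
    (hα : α = (∑ j, conj (b j) ^ 2) * (s.re / star s))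
    (hβ : β = (√(1 - normSq α))⁻¹) (hγ : γ = √(1 + α.re)) :
    β ^ 2 * (1 - normSq α) = 1 ∧ γ ^ 2 = 1 + α.re ∧ γ ≠ 0 := by
  have hα1 : normSq α < 1 := hα ▸ normSq_mul_re_div_star_lt_one him hb
  have hre : 0 < 1 + α.re := by
    have hnorm : ‖α‖ < 1 := by rwa [← sq_lt_one_iff₀ (norm_nonneg α), Complex.sq_norm]
    linarith [neg_abs_le α.re, abs_re_le_norm α]
  refine ⟨?_, ?_, ?_⟩
  · rw [hβ, inv_pow, Real.sq_sqrt (by linarith), inv_mul_cancel₀ (by linarith)]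
  · rw [hγ, Real.sq_sqrt hre.le]
  · rw [hγ]; exact Real.sqrt_ne_zero'.mpr hre

theorem realBlock_map_mul_conjTranspose {ι κ : Type*} (u : ι → ℂ) (v : κ → ℂ) {α : ℂ}
    {β γ : ℝ} (hβ : β ^ 2 * (1 - normSq α) = 1) (hγ : γ ^ 2 = 1 + α.re) :
    (realBlock α β γ u).map ofReal * ((realBlock α β γ v).map ofReal)ᴴ
      = ((γ ^ 2 / 2 : ℝ) : ℂ) • (conjPair u * mixing α β * (conjPair v * mixing α β)ᴴ) := by
  rw [← conjPair_mul_realifier u β hγ, ← conjPair_mul_realifier v β hγ, conjTranspose_mul,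
    Matrix.mul_assoc, ← Matrix.mul_assoc (realifier α β), realifier_mul_conjTranspose hβ, hγ]
  simp [conjTranspose_mul, Matrix.mul_assoc]

theorem smul_realBlock_map_mul_conjTranspose_self {ι : Type*} (y : ι → ℂ) {α : ℂ}
    {β γ : ℝ} (hβ : β ^ 2 * (1 - normSq α) = 1) (hγ : γ ^ 2 = 1 + α.re) (hγ0 : γ ≠ 0) :
    ((√2 / γ) • realBlock α β γ y).map ofReal * (((√2 / γ) • realBlock α β γ y).map ofReal)ᴴ
      = conjPair y * mixing α β * (conjPair y * mixing α β)ᴴ := by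
  rw [map_ofReal_smul, conjTranspose_smul, Matrix.smul_mul, Matrix.mul_smul, smul_smul,
    realBlock_map_mul_conjTranspose y y hβ hγ, smul_smul]
  convert one_smul ℂ _
  rw [star_def, conj_ofReal]
  norm_cast
  rw [div_mul_div_comm, Real.mul_self_sqrt zero_le_two]
  field_simp

theorem smul_realBlock_update_map {n m : Type*} [Fintype n] (E : Matrix n n ℝ) (y : n → ℂ)
    (b : m → ℂ) {α : ℂ} {β γ : ℝ} (sr : ℝ) (hβ : β ^ 2 * (1 - normSq α) = 1)
    (hγ : γ ^ 2 = 1 + α.re) (hγ0 : γ ≠ 0) :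
    ((2 / γ * √sr) • (E * ((√2 / γ) • realBlock α β γ y) * (realBlock α β γ b)ᵀ)).map ofReal
      = E.map ofReal * (conjPair y * mixing α β)
          * ((√(2 * sr) : ℂ) • conjPair b * mixing α β)ᴴ := by
  rw [map_ofReal_smul, map_ofReal_mul, map_ofReal_mul, map_ofReal_smul, map_ofReal_transpose,
    Matrix.mul_smul, Matrix.smul_mul, Matrix.mul_assoc,
    realBlock_map_mul_conjTranspose y b hβ hγ, Matrix.mul_smul, smul_smul, smul_smul,
    Matrix.smul_mul, conjTranspose_smul, Matrix.mul_smul, ← Matrix.mul_assoc]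
  congr 1
  rw [star_def, conj_ofReal]
  norm_cast
  rw [Real.sqrt_mul zero_le_two]
  field_simp

theorem conjPair_update_mul_conjTranspose {n m : Type*} [Fintype n] [DecidableEq n]
    [Fintype m] {A E : Matrix n n ℝ} {W : Matrix n m ℝ} {s α : ℂ} {β c : ℝ} {y : n → ℂ}
    {b : m → ℂ} (hs : s ≠ 0) (hc : c ^ 2 = 2 * s.re) (hb : ∑ j, normSq (b j) = 1)
    (hα : α = (∑ j, conj (b j) ^ 2) * (s.re / star s)) (hβ : β ^ 2 * (1 - normSq α) = 1)
    (hinv : IsUnit (A.map ofReal - s • E.map ofReal).det)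
    (hy : y = (c : ℂ) • ((A.map ofReal - s • E.map ofReal)⁻¹ *ᵥ (W.map ofReal *ᵥ b))) :
    (W.map ofReal + E.map ofReal * (conjPair y * mixing α β)
        * ((c : ℂ) • conjPair b * mixing α β)ᴴ)
      * (W.map ofReal + E.map ofReal * (conjPair y * mixing α β)
        * ((c : ℂ) • conjPair b * mixing α β)ᴴ)ᴴ
      = W.map ofReal * (W.map ofReal)ᴴ
        + (A.map ofReal * (conjPair y * mixing α β * (conjPair y * mixing α β)ᴴ)
            * (E.map ofReal)ᴴ
          + E.map ofReal * (conjPair y * mixing α β * (conjPair y * mixing α β)ᴴ)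
            * (A.map ofReal)ᴴ) := by
  have hsolve : (A.map ofReal - s • E.map ofReal) *ᵥ y = (c : ℂ) • (W.map ofReal *ᵥ b) := by
    rw [hy, mulVec_smul, mulVec_mulVec, mul_nonsing_inv _ hinv, one_mulVec]
  have hK : (mixing α β * (mixing α β)ᴴ)ᴴ = mixing α β * (mixing α β)ᴴ := by
    rw [conjTranspose_mul, conjTranspose_conjTranspose]
  simpa only [conjTranspose_mul, Matrix.mul_assoc] using
    residual_factor_update (conjPair_sylvester hsolve)
      (smul_conjPair_conjTranspose_mul_self hs hc hb hα) hK
      (mixing_mul_conjTranspose_mul_mixingGram hβ)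

/-- Real-arithmetic formulation of the tangential low-rank ADI iteration for
complex conjugated shift pairs (Theorem 6): the real iterates `Zr i` and
`Bp i` reproduce the complex formulation (`Zr i (Zr i)ᵀ = Zc i (Zc i)ᴴ` and
`Bp i = Bpc i`), and the concatenated real low-rank factor satisfies the
residual factorization. -/
theorem tangential_adi_complex_shifts_real_arithmetic
    {n m k : ℕ}
    (A E : Matrix (Fin n) (Fin n) ℝ) (B : Matrix (Fin n) (Fin m) ℝ)
    (Ac Ec : Matrix (Fin n) (Fin n) ℂ) (Bc : Matrix (Fin n) (Fin m) ℂ)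
    (hAc : Ac = A.map Complex.ofReal) (hEc : Ec = E.map Complex.ofReal)
    (hBc : Bc = B.map Complex.ofReal)
    (s : Fin k → ℂ) (hs : ∀ i, 0 < (s i).re) (him : ∀ i, (s i).im ≠ 0)
    (b : Fin k → Fin m → ℂ) (hb : ∀ i, ∑ j, Complex.normSq (b i j) = 1)
    (hinv : ∀ i, IsUnit (Ac - s i • Ec).det)
    -- αᵢ = (bᵢᴴ b̄ᵢ)·Re(sᵢ)/s̄ᵢ ;  βᵢ = 1/√(1 − αᵢ ᾱᵢ) ;  γᵢ = √(1 + Re αᵢ)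
    (α : Fin k → ℂ) (β γ : Fin k → ℝ)
    (hα : ∀ i, α i = (∑ j, (starRingEnd ℂ (b i j)) ^ 2)
        * (((s i).re : ℂ) / star (s i)))
    (hβ : ∀ i, β i = (Real.sqrt (1 - Complex.normSq (α i)))⁻¹)
    (hγ : ∀ i, γ i = Real.sqrt (1 + (α i).re))
    -- real-arithmetic iteration
    (y : Fin k → Fin n → ℂ)
    (Zr : Fin k → Matrix (Fin n) (Fin 2) ℝ)
    (Bp : Fin (k + 1) → Matrix (Fin n) (Fin m) ℝ)
    (hBp0 : Bp 0 = B)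
    (hy : ∀ i, y i = (Real.sqrt (2 * (s i).re) : ℂ) •
        ((Ac - s i • Ec)⁻¹ *ᵥ ((Bp i.castSucc).map Complex.ofReal *ᵥ b i)))
    (hZr : ∀ i, Zr i = Matrix.of fun r =>
      ![(Real.sqrt 2 / γ i) * (y i r).re,
        (Real.sqrt 2 / γ i)
          * (β i * ((α i).im * (y i r).re + (γ i) ^ 2 * (y i r).im))])
    (hBpsucc : ∀ i : Fin k,
      Bp i.succ = Bp i.castSucc
        + ((2 / γ i) * Real.sqrt (s i).re) •
            (E * Zr i * (Matrix.of fun (j : Fin m) =>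
              ![(b i j).re,
                β i * ((α i).im * (b i j).re + (γ i) ^ 2 * (b i j).im)])ᵀ))
    -- complex formulation (Theorem 5)
    (yc : Fin k → Fin n → ℂ)
    (Zc : Fin k → Matrix (Fin n) (Fin 2) ℂ)
    (Lc : Fin k → Matrix (Fin m) (Fin 2) ℂ)
    (Bpc : Fin (k + 1) → Matrix (Fin n) (Fin m) ℂ)
    (hBpc0 : Bpc 0 = Bc)
    (hyc : ∀ i, yc i = (Real.sqrt (2 * (s i).re) : ℂ) •
        ((Ac - s i • Ec)⁻¹ *ᵥ (Bpc i.castSucc *ᵥ b i)))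
    (hZc : ∀ i, Zc i
      = Matrix.of fun r => ![yc i r, (β i : ℂ) * (star (yc i r) - α i * yc i r)])
    (hLc : ∀ i, Lc i
      = Matrix.of fun j => ![(Real.sqrt (2 * (s i).re) : ℂ) * b i j,
          (Real.sqrt (2 * (s i).re) : ℂ)
            * ((β i : ℂ) * (star (b i j) - α i * b i j))])
    (hBpcsucc : ∀ i : Fin k,
      Bpc i.succ = Bpc i.castSucc + Ec * Zc i * (Lc i)ᴴ)
    -- the concatenated real low-rank factor Z = [Z₁, …, Z_k]
    (Z : Matrix (Fin n) (Fin k × Fin 2) ℝ)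
    (hZ : ∀ r p, Z r p = Zr p.1 r p.2) :
    (∀ i : Fin k,
        ((Zr i).map Complex.ofReal) * ((Zr i).map Complex.ofReal)ᴴ
          = Zc i * (Zc i)ᴴ)
      ∧ (∀ i : Fin (k + 1), (Bp i).map Complex.ofReal = Bpc i)
      ∧ A * (Z * Zᵀ) * Eᵀ + E * (Z * Zᵀ) * Aᵀ + B * Bᵀ
          = Bp (Fin.last k) * (Bp (Fin.last k))ᵀ := by
  subst hAc hEc hBc
  have hpar : ∀ i, β i ^ 2 * (1 - normSq (α i)) = 1 ∧ γ i ^ 2 = 1 + (α i).re ∧ γ i ≠ 0 :=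
    fun i => adi_parameter_identities (him i) (hb i) (hα i) (hβ i) (hγ i)
  have hZr' : ∀ i, Zr i = (√2 / γ i) • realBlock (α i) (β i) (γ i) (y i) := fun i => by
    rw [hZr i]; ext r p; fin_cases p <;> simp [realBlock]
  have hZc' : ∀ i, Zc i = conjPair (yc i) * mixing (α i) (β i) := fun i => by
    rw [hZc i, conjPair_mul_mixing]
  have hLc' : ∀ i, Lc i = ((√(2 * (s i).re) : ℂ) • conjPair (b i)) * mixing (α i) (β i) :=
    fun i => by rw [hLc i, Matrix.smul_mul, conjPair_mul_mixing]; ext j p; fin_cases p <;> simp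
  have hBp : ∀ i, (Bp i).map ofReal = Bpc i := by
    intro i
    induction i using Fin.induction with
    | zero => rw [hBp0, hBpc0]
    | succ i ih =>
      have hyy : y i = yc i := by rw [hy i, hyc i, ih]
      rw [hBpsucc i, hBpcsucc i, Matrix.map_add _ ofReal_add, ih, hZr' i, hZc' i, hLc' i, hyy]
      exact congrArg _ (smul_realBlock_update_map E _ _ _ (hpar i).1 (hpar i).2.1 (hpar i).2.2)
  have hZZ : ∀ i, (Zr i).map ofReal * ((Zr i).map ofReal)ᴴ = Zc i * (Zc i)ᴴ := fun i => by
    rw [hZr' i, hZc' i, hy i, hBp, ← hyc i]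
    exact smul_realBlock_map_mul_conjTranspose_self _ (hpar i).1 (hpar i).2.1 (hpar i).2.2
  have hstep : ∀ i : Fin k, Bpc i.succ * (Bpc i.succ)ᴴ = Bpc i.castSucc * (Bpc i.castSucc)ᴴ
      + (A.map ofReal * (Zc i * (Zc i)ᴴ) * (E.map ofReal)ᴴ
        + E.map ofReal * (Zc i * (Zc i)ᴴ) * (A.map ofReal)ᴴ) := fun i => by
    rw [hBpcsucc i, hZc' i, hLc' i, ← hBp]
    exact conjPair_update_mul_conjTranspose (fun h => him i (by simp [h]))
      (Real.sq_sqrt (by linarith [hs i])) (hb i) (hα i) (hpar i).1 (hinv i)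
      (by rw [hyc i, hBp])
  refine ⟨hZZ, hBp, Matrix.map_injective ofReal_injective ?_⟩
  simp only [Matrix.map_add _ ofReal_add, map_ofReal_mul, map_ofReal_transpose,
    map_ofReal_mul_transpose_of_blocks hZ, hZZ, hBp, ← hBpc0]
  exact residual_factor_telescope _ _ hstep
end

section
/- Let A, E ∈ ℝ^{n×n}, B ∈ ℝ^{n×m}, and let s_1, …, s_k ∈ ℂ with Re(s_i) > 0 and A − s_i E invertible for each i. Define the classical low-rank ADI iterates Z_1 = √(2 Re(s_1)) (A − s_1 E)^{-1} B and, for i ≥ 2, Z_i = √(Re(s_i)/Re(s_{i−1})) [I + (s_i + s̄_{i−1})(A − s_i E)^{-1} E] Z_{i−1}. Define a second iteration by B_{⊥,0} = B, Z'_i = √(2 Re(s_i)) (A − s_i E)^{-1} B_{⊥,i−1}, and B_{⊥,i} = B_{⊥,i−1} + √(2 Re(s_i)) E Z'_i. Then Z_i = Z'_i for every i = 1, …, k; i.e., the two iterations produce the same low-rank factor Z = [Z_1, …, Z_k]. -/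
open Matrix Complex

/-!
Write `M i = A - s i E` and `c i = √(2 Re s i)`. Since `c i ^ 2 = s i + s̄ i`, one residual
update is `B⊥,i = (A + s̄ i E) M i⁻¹ B⊥,i-1`, and `A + s̄ i E = M (i+1) + (s (i+1) + s̄ i) E`.
Hence `Z' (i+1) = c (i+1) / c i · (I + (s (i+1) + s̄ i) M (i+1)⁻¹ E) Z' i`, which is the
classical ADI recursion, so the two sequences agree by induction.
-/

theorem Matrix.nonsing_inv_mul_add_smul_mul {n p K : Type*} [Fintype n] [DecidableEq n]
    [CommRing K] {N : Matrix n n K} (hN : IsUnit N.det) (E : Matrix n n K) (t : K)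
    (Y : Matrix n p K) : N⁻¹ * ((N + t • E) * Y) = (1 + t • (N⁻¹ * E)) * Y := by
  rw [← Matrix.mul_assoc, Matrix.mul_add, Matrix.mul_smul, nonsing_inv_mul _ hN]

theorem Real.sqrt_div_mul_sqrt_two_mul {r : ℝ} (hr : 0 < r) (r' : ℝ) :
    √(r' / r) * √(2 * r) = √(2 * r') := by
  rw [← Real.sqrt_mul' _ (by positivity)]
  congr 1
  field_simp

theorem Complex.ofReal_sqrt_two_mul_re_mul_self {s : ℂ} (hs : 0 ≤ s.re) :
    (√(2 * s.re) : ℂ) * √(2 * s.re) = s + star s := by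
  rw [← ofReal_mul, Real.mul_self_sqrt (by positivity), star_def, add_conj]

section ADI

variable {n p : Type*} [Fintype n] [DecidableEq n] (A E : Matrix n n ℂ)

theorem adi_residual_factor_update {s : ℂ} (hs : 0 ≤ s.re) (hM : IsUnit (A - s • E).det)
    (X : Matrix n p ℂ) :
    X + (√(2 * s.re) : ℂ) • (E * ((√(2 * s.re) : ℂ) • ((A - s • E)⁻¹ * X)))
      = (A + star s • E) * ((A - s • E)⁻¹ * X) := by
  have hX : X = (A - s • E) * ((A - s • E)⁻¹ * X) := by
    rw [← Matrix.mul_assoc, mul_nonsing_inv _ hM, Matrix.one_mul]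
  nth_rw 1 [hX]
  rw [Matrix.mul_smul, smul_smul, ofReal_sqrt_two_mul_re_mul_self hs, ← Matrix.smul_mul,
    ← Matrix.add_mul]
  congr 1
  module

theorem adi_residual_factor_step {s s' : ℂ} (hs : 0 < s.re) (hM : IsUnit (A - s • E).det)
    (hN : IsUnit (A - s' • E).det) (X : Matrix n p ℂ) :
    (√(2 * s'.re) : ℂ) • ((A - s' • E)⁻¹ *
        (X + (√(2 * s.re) : ℂ) • (E * ((√(2 * s.re) : ℂ) • ((A - s • E)⁻¹ * X)))))
      = (√(s'.re / s.re) : ℂ) • ((1 + (s' + star s) • ((A - s' • E)⁻¹ * E)) *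
          ((√(2 * s.re) : ℂ) • ((A - s • E)⁻¹ * X))) := by
  have hshift : A + star s • E = A - s' • E + (s' + star s) • E := by module
  rw [adi_residual_factor_update A E hs.le hM, hshift,
    nonsing_inv_mul_add_smul_mul hN, Matrix.mul_smul, smul_smul, ← ofReal_mul,
    Real.sqrt_div_mul_sqrt_two_mul hs]

end ADI

theorem adi_reformulation_residual_factor_general
    {n m : ℕ} (k : ℕ)
    (Ac Ec : Matrix (Fin n) (Fin n) ℂ) (Bc : Matrix (Fin n) (Fin m) ℂ)
    (s : ℕ → ℂ) (hs : ∀ i < k, 0 < (s i).re)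
    (hinv : ∀ i < k, IsUnit (Ac - s i • Ec).det)
    (Z Z' Bp : ℕ → Matrix (Fin n) (Fin m) ℂ)
    -- classical low-rank ADI iteration
    (hZ0 : Z 0 = (Real.sqrt (2 * (s 0).re) : ℂ) • ((Ac - s 0 • Ec)⁻¹ * Bc))
    (hZsucc : ∀ i, i + 1 < k →
      Z (i + 1) = (Real.sqrt ((s (i + 1)).re / (s i).re) : ℂ) •
        (((1 : Matrix (Fin n) (Fin n) ℂ)
            + (s (i + 1) + star (s i)) • ((Ac - s (i + 1) • Ec)⁻¹ * Ec)) * Z i))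
    -- reformulated iteration via the residual factor
    (hBp0 : Bp 0 = Bc)
    (hZ' : ∀ i < k,
      Z' i = (Real.sqrt (2 * (s i).re) : ℂ) • ((Ac - s i • Ec)⁻¹ * Bp i))
    (hBpsucc : ∀ i < k,
      Bp (i + 1) = Bp i + (Real.sqrt (2 * (s i).re) : ℂ) • (Ec * Z' i)) :
    ∀ i < k, Z i = Z' i := by
  intro i hik
  induction i with
  | zero => rw [hZ' 0 hik, hBp0, hZ0]
  | succ i ih =>
    have hi : i < k := Nat.lt_of_succ_lt hik
    rw [hZsucc i hik, ih hi, hZ' (i + 1) hik, hBpsucc i hi, hZ' i hi,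
      adi_residual_factor_step Ac Ec (hs i hi) (hinv i hi) (hinv (i + 1) hik)]

/-- Reformulation of the low-rank ADI iteration in terms of the residual factor
`B⊥` (Lemma 3): the classical iterates `Z i` coincide with the iterates `Z' i`
produced from the successive residual factors. -/
theorem adi_reformulation_residual_factor
    {n m : ℕ} (k : ℕ)
    (A E : Matrix (Fin n) (Fin n) ℝ) (B : Matrix (Fin n) (Fin m) ℝ)
    (Ac Ec : Matrix (Fin n) (Fin n) ℂ) (Bc : Matrix (Fin n) (Fin m) ℂ)
    (hAc : Ac = A.map Complex.ofReal) (hEc : Ec = E.map Complex.ofReal)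
    (hBc : Bc = B.map Complex.ofReal)
    (s : ℕ → ℂ) (hs : ∀ i < k, 0 < (s i).re)
    (hinv : ∀ i < k, IsUnit (Ac - s i • Ec).det)
    (Z Z' Bp : ℕ → Matrix (Fin n) (Fin m) ℂ)
    -- classical low-rank ADI iteration
    (hZ0 : Z 0 = (Real.sqrt (2 * (s 0).re) : ℂ) • ((Ac - s 0 • Ec)⁻¹ * Bc))
    (hZsucc : ∀ i, i + 1 < k →
      Z (i + 1) = (Real.sqrt ((s (i + 1)).re / (s i).re) : ℂ) •
        (((1 : Matrix (Fin n) (Fin n) ℂ)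
            + (s (i + 1) + star (s i)) • ((Ac - s (i + 1) • Ec)⁻¹ * Ec)) * Z i))
    -- reformulated iteration via the residual factor
    (hBp0 : Bp 0 = Bc)
    (hZ' : ∀ i < k,
      Z' i = (Real.sqrt (2 * (s i).re) : ℂ) • ((Ac - s i • Ec)⁻¹ * Bp i))
    (hBpsucc : ∀ i < k,
      Bp (i + 1) = Bp i + (Real.sqrt (2 * (s i).re) : ℂ) • (Ec * Z' i)) :
    ∀ i < k, Z i = Z' i :=
  adi_reformulation_residual_factor_general k Ac Ec Bc s hs hinv Z Z' Bp hZ0 hZsucc hBp0 hZ' hBpsucc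
end

section
/- Let A, E ∈ ℝ^{n×n}, B ∈ ℝ^{n×m}, let s_1, …, s_k ∈ ℂ with Re(s_i) > 0 and A − s_i E invertible, and let b_1, …, b_k ∈ ℂ^m be tangential directions. Set V = [(A − s_1 E)^{-1} B b_1, …, (A − s_k E)^{-1} B b_k] ∈ ℂ^{n×k}, S = diag(s_1, …, s_k) ∈ ℂ^{k×k}, and L = [b_1, …, b_k] ∈ ℂ^{m×k}. Then (i) A V − E V S = B L; and (ii) if X ∈ ℂ^{k×k} is Hermitian, invertible, and satisfies X S + S^H X = L^H L, then the tangential ADI approximation P̂ = V X^{-1} V^H and the matrix B_⊥ = B + E V X^{-1} L^H satisfy A P̂ Eᵀ + E P̂ Aᵀ + B Bᵀ = B_⊥ B_⊥^H. -/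
/-! Column `i` of `A V − E V S` is `(A − sᵢ E) vᵢ = B bᵢ`, which is the Sylvester equation.
Substituting `A V = B L + E V S` into `A P̂ Eᴴ` and its adjoint leaves
`B Bᴴ + B Fᴴ + F Bᴴ + E V (S Y + Y Sᴴ) Vᴴ Eᴴ` with `Y = X⁻¹` and `F = E V Y Lᴴ`; multiplying
`X S + Sᴴ X = Lᴴ L` by `X⁻¹` on both sides turns the last term into `F Fᴴ`. The data are real,
so transposes are conjugate transposes. -/

open Matrix Complex

theorem Matrix.mul_sub_mul_mul_diagonal_eq_of_mulVec {R l n m k : Type*} [CommRing R]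
    [Fintype n] [Fintype m] [Fintype k] [DecidableEq k]
    {A E : Matrix l n R} {B : Matrix l m R} {V : Matrix n k R} {L : Matrix m k R} {s : k → R}
    (h : ∀ i, (A - s i • E) *ᵥ Vᵀ i = B *ᵥ Lᵀ i) :
    A * V - E * V * diagonal s = B * L := by
  ext r i
  have := congrFun (h i) r
  simp only [mulVec, dotProduct, sub_apply, smul_apply, smul_eq_mul, sub_mul,
    Finset.sum_sub_distrib, transpose_apply] at this
  rw [sub_apply, mul_diagonal, mul_apply, mul_apply, mul_apply, ← this, Finset.sum_mul]
  simp only [mul_assoc, mul_comm (V _ i), mul_left_comm (E r _)]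

theorem Matrix.map_ofReal_conjTranspose {m n : Type*} (M : Matrix m n ℝ) :
    (M.map ofReal)ᴴ = (M.map ofReal)ᵀ := by
  rw [← conjTranspose_map _ fun x => (conj_ofReal x).symm, conjTranspose_eq_transpose_of_trivial,
    transpose_map]

theorem Matrix.lyapunov_residual_eq_mul_conjTranspose {R l n m k : Type*} [Ring R] [StarRing R]
    [Fintype n] [Fintype m] [Fintype k]
    {A E : Matrix l n R} {B : Matrix l m R} {V : Matrix n k R} {L : Matrix m k R}
    {S Y : Matrix k k R} (hY : Y.IsHermitian) (hAV : A * V = B * L + E * V * S)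
    (hSY : S * Y + Y * Sᴴ = Y * (Lᴴ * L) * Y) :
    A * (V * Y * Vᴴ) * Eᴴ + E * (V * Y * Vᴴ) * Aᴴ + B * Bᴴ
      = (B + E * V * Y * Lᴴ) * (B + E * V * Y * Lᴴ)ᴴ := by
  have hVA : Vᴴ * Aᴴ = Lᴴ * Bᴴ + Sᴴ * (Vᴴ * Eᴴ) := by
    rw [← conjTranspose_mul, hAV]
    simp only [conjTranspose_add, conjTranspose_mul, Matrix.mul_assoc]
  calc A * (V * Y * Vᴴ) * Eᴴ + E * (V * Y * Vᴴ) * Aᴴ + B * Bᴴ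
      = (A * V) * Y * Vᴴ * Eᴴ + E * V * Y * (Vᴴ * Aᴴ) + B * Bᴴ := by
        simp only [Matrix.mul_assoc]
    _ = B * Bᴴ + B * L * Y * Vᴴ * Eᴴ + E * V * Y * Lᴴ * Bᴴ
          + E * V * (S * Y + Y * Sᴴ) * Vᴴ * Eᴴ := by
        rw [hAV, hVA]
        simp only [Matrix.add_mul, Matrix.mul_add, Matrix.mul_assoc]
        abel
    _ = _ := by
        rw [hSY]
        simp only [conjTranspose_add, conjTranspose_mul, hY.eq, conjTranspose_conjTranspose,
          Matrix.add_mul, Matrix.mul_add, Matrix.mul_assoc]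
        abel

theorem Matrix.mul_inv_add_inv_mul_eq_of_mul_add_mul_eq {R k : Type*} [CommRing R] [Fintype k]
    [DecidableEq k] {X S S' T : Matrix k k R} (hX : IsUnit X.det) (h : X * S + S' * X = T) :
    S * X⁻¹ + X⁻¹ * S' = X⁻¹ * T * X⁻¹ := by
  rw [← h, Matrix.mul_add, Matrix.add_mul, ← Matrix.mul_assoc, nonsing_inv_mul _ hX,
    Matrix.one_mul, Matrix.mul_assoc, Matrix.mul_assoc, mul_nonsing_inv _ hX, Matrix.mul_one]

theorem tangential_krylov_adi_general
    {n m k : ℕ}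
    (A E : Matrix (Fin n) (Fin n) ℝ) (B : Matrix (Fin n) (Fin m) ℝ)
    (Ac Ec : Matrix (Fin n) (Fin n) ℂ) (Bc : Matrix (Fin n) (Fin m) ℂ)
    (hAc : Ac = A.map Complex.ofReal) (hEc : Ec = E.map Complex.ofReal)
    (hBc : Bc = B.map Complex.ofReal)
    (s : Fin k → ℂ)
    (hinv : ∀ i, IsUnit (Ac - s i • Ec).det)
    (b : Fin k → Fin m → ℂ)
    -- V = [(A−s₁E)⁻¹ B b₁, …, (A−s_kE)⁻¹ B b_k]
    (V : Matrix (Fin n) (Fin k) ℂ)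
    (hV : ∀ r i, V r i = ((Ac - s i • Ec)⁻¹ *ᵥ (Bc *ᵥ b i)) r)
    -- S = diag(s₁, …, s_k), L = [b₁, …, b_k]
    (S : Matrix (Fin k) (Fin k) ℂ) (hS : S = Matrix.diagonal s)
    (L : Matrix (Fin m) (Fin k) ℂ) (hL : ∀ j i, L j i = b i j) :
    Ac * V - Ec * V * S = Bc * L
      ∧ ∀ X : Matrix (Fin k) (Fin k) ℂ, X.IsHermitian → IsUnit X.det →
          X * S + Sᴴ * X = Lᴴ * L →
          Ac * (V * X⁻¹ * Vᴴ) * Ecᵀ + Ec * (V * X⁻¹ * Vᴴ) * Acᵀ + Bc * Bcᵀ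
            = (Bc + Ec * V * X⁻¹ * Lᴴ) * (Bc + Ec * V * X⁻¹ * Lᴴ)ᴴ := by
  have hsylv : Ac * V - Ec * V * S = Bc * L := by
    subst hS
    refine mul_sub_mul_mul_diagonal_eq_of_mulVec fun i => ?_
    have hVi : Vᵀ i = (Ac - s i • Ec)⁻¹ *ᵥ (Bc *ᵥ b i) := funext fun r => hV r i
    have hLi : Lᵀ i = b i := funext fun j => hL j i
    rw [hVi, hLi, mulVec_mulVec, mul_nonsing_inv _ (hinv i), one_mulVec]
  refine ⟨hsylv, fun X hX hXdet hXS => ?_⟩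
  have hAt : Acᵀ = Acᴴ := by rw [hAc, map_ofReal_conjTranspose]
  have hEt : Ecᵀ = Ecᴴ := by rw [hEc, map_ofReal_conjTranspose]
  have hBt : Bcᵀ = Bcᴴ := by rw [hBc, map_ofReal_conjTranspose]
  rw [hAt, hEt, hBt]
  exact lyapunov_residual_eq_mul_conjTranspose hX.inv (sub_eq_iff_eq_add.mp hsylv)
    (mul_inv_add_inv_mul_eq_of_mul_add_mul_eq hXdet hXS)

/-- Tangential generalization of the Krylov computation of the ADI
approximation (Section 3): the tangential Krylov basis `V` satisfies the
Sylvester equation `A V − E V S = B L`, and any Hermitian invertible solution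
`X` of `X S + Sᴴ X = Lᴴ L` yields the residual factorization for the
tangential ADI approximation `P̂ = V X⁻¹ Vᴴ`. -/
theorem tangential_krylov_adi
    {n m k : ℕ}
    (A E : Matrix (Fin n) (Fin n) ℝ) (B : Matrix (Fin n) (Fin m) ℝ)
    (Ac Ec : Matrix (Fin n) (Fin n) ℂ) (Bc : Matrix (Fin n) (Fin m) ℂ)
    (hAc : Ac = A.map Complex.ofReal) (hEc : Ec = E.map Complex.ofReal)
    (hBc : Bc = B.map Complex.ofReal)
    (s : Fin k → ℂ) (hs : ∀ i, 0 < (s i).re)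
    (hinv : ∀ i, IsUnit (Ac - s i • Ec).det)
    (b : Fin k → Fin m → ℂ)
    -- V = [(A−s₁E)⁻¹ B b₁, …, (A−s_kE)⁻¹ B b_k]
    (V : Matrix (Fin n) (Fin k) ℂ)
    (hV : ∀ r i, V r i = ((Ac - s i • Ec)⁻¹ *ᵥ (Bc *ᵥ b i)) r)
    -- S = diag(s₁, …, s_k), L = [b₁, …, b_k]
    (S : Matrix (Fin k) (Fin k) ℂ) (hS : S = Matrix.diagonal s)
    (L : Matrix (Fin m) (Fin k) ℂ) (hL : ∀ j i, L j i = b i j) :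
    Ac * V - Ec * V * S = Bc * L
      ∧ ∀ X : Matrix (Fin k) (Fin k) ℂ, X.IsHermitian → IsUnit X.det →
          X * S + Sᴴ * X = Lᴴ * L →
          Ac * (V * X⁻¹ * Vᴴ) * Ecᵀ + Ec * (V * X⁻¹ * Vᴴ) * Acᵀ + Bc * Bcᵀ
            = (Bc + Ec * V * X⁻¹ * Lᴴ) * (Bc + Ec * V * X⁻¹ * Lᴴ)ᴴ :=
  tangential_krylov_adi_general A E B Ac Ec Bc hAc hEc hBc s hinv b V hV S hS L hL
end

section
/- Let A, E ∈ ℝ^{n×n} and B ∈ ℝ^{n×m} be real, let V ∈ ℂ^{n×q}, S ∈ ℂ^{q×q}, L ∈ ℂ^{m×q} satisfy the Sylvester equation A V − E V S = B L, and let X ∈ ℂ^{q×q} be Hermitian, invertible, and satisfy X S + S^H X = L^H L. Then, with P̂ = V X^{-1} V^H and B_⊥ = B + E V X^{-1} L^H, the Lyapunov residual factorizes as A P̂ Eᵀ + E P̂ Aᵀ + B Bᵀ = B_⊥ B_⊥^H. -/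
/-!
Since `A`, `E`, `B` are real, their transposes are their conjugate transposes, so the claim
is an identity over any commutative star ring. Substituting `A V = B L + E V S` into
`A P̂ Eᴴ + E P̂ Aᴴ` leaves, besides the cross terms of `B⊥ B⊥ᴴ`, the term
`E V (S X⁻¹ + X⁻¹ Sᴴ) Vᴴ Eᴴ`; conjugating `X S + Sᴴ X = Lᴴ L` by the Hermitian `X⁻¹` turns it
into `E V X⁻¹ Lᴴ L X⁻¹ Vᴴ Eᴴ`, the quadratic term of `B⊥ B⊥ᴴ`.
-/

open Matrix Complex

namespace Matrix

variable {m n p : Type*}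

theorem transpose_map_ofReal (A : Matrix m n ℝ) :
    (A.map Complex.ofReal)ᵀ = (A.map Complex.ofReal)ᴴ := by
  rw [← conjTranspose_map _ fun x => (Complex.conj_ofReal x).symm,
    conjTranspose_eq_transpose_of_trivial, transpose_map]

variable {R : Type*} [CommRing R] [StarRing R] [Fintype m] [Fintype n] [Fintype p]
  [DecidableEq p]

theorem mul_inv_add_inv_mul_conjTranspose_of_lyapunov {S X : Matrix p p R}
    {L : Matrix m p R} (hX : IsUnit X.det) (hlyap : X * S + Sᴴ * X = Lᴴ * L) :
    S * X⁻¹ + X⁻¹ * Sᴴ = X⁻¹ * Lᴴ * L * X⁻¹ := by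
  have hXY : X * X⁻¹ = 1 := mul_nonsing_inv X hX
  have hYX : X⁻¹ * X = 1 := nonsing_inv_mul X hX
  calc S * X⁻¹ + X⁻¹ * Sᴴ = X⁻¹ * (X * S + Sᴴ * X) * X⁻¹ := by
        simp only [Matrix.mul_add, Matrix.add_mul, ← Matrix.mul_assoc, hYX, Matrix.one_mul]
        simp only [Matrix.mul_assoc, hXY, Matrix.mul_one]
    _ = X⁻¹ * Lᴴ * L * X⁻¹ := by rw [hlyap]; simp only [Matrix.mul_assoc]

theorem lyapunov_residual_eq_mul_conjTranspose_s7 {A E : Matrix n n R} {B : Matrix n m R}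
    {V : Matrix n p R} {S X : Matrix p p R} {L : Matrix m p R}
    (hsyl : A * V - E * V * S = B * L) (hX : X.IsHermitian) (hXdet : IsUnit X.det)
    (hlyap : X * S + Sᴴ * X = Lᴴ * L) :
    A * (V * X⁻¹ * Vᴴ) * Eᴴ + E * (V * X⁻¹ * Vᴴ) * Aᴴ + B * Bᴴ =
      (B + E * V * X⁻¹ * Lᴴ) * (B + E * V * X⁻¹ * Lᴴ)ᴴ := by
  have hAV : A * V = B * L + E * V * S := by rw [← hsyl, sub_add_cancel]
  have hVA : Vᴴ * Aᴴ = Lᴴ * Bᴴ + Sᴴ * Vᴴ * Eᴴ := by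
    simpa only [conjTranspose_mul, conjTranspose_add, Matrix.mul_assoc]
      using congrArg conjTranspose hAV
  have hlyap_inv := mul_inv_add_inv_mul_conjTranspose_of_lyapunov hXdet hlyap
  set Y := X⁻¹
  have hY : Yᴴ = Y := hX.inv
  calc A * (V * Y * Vᴴ) * Eᴴ + E * (V * Y * Vᴴ) * Aᴴ + B * Bᴴ
      = A * V * Y * Vᴴ * Eᴴ + E * V * Y * (Vᴴ * Aᴴ) + B * Bᴴ := by
        simp only [Matrix.mul_assoc]
    _ = B * Bᴴ + B * L * Y * Vᴴ * Eᴴ + E * V * Y * Lᴴ * Bᴴ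
          + E * V * (S * Y + Y * Sᴴ) * Vᴴ * Eᴴ := by
        rw [hAV, hVA]
        simp only [Matrix.add_mul, Matrix.mul_add, Matrix.mul_assoc]
        abel
    _ = (B + E * V * Y * Lᴴ) * (B + E * V * Y * Lᴴ)ᴴ := by
        rw [hlyap_inv]
        simp only [conjTranspose_add, conjTranspose_mul, conjTranspose_conjTranspose, hY,
          Matrix.add_mul, Matrix.mul_add, Matrix.mul_assoc]
        abel

end Matrix

/-- Low-rank residual factorization for the Krylov formulation of the ADI
approximation (equation (12) and Remark 3): if `A V − E V S = B L` and the
Hermitian invertible `X` solves `X S + Sᴴ X = Lᴴ L`, then with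
`P̂ = V X⁻¹ Vᴴ` and `B⊥ = B + E V X⁻¹ Lᴴ` the Lyapunov residual factorizes as
`B⊥ B⊥ᴴ`. -/
theorem krylov_adi_residual_factorization
    {n m q : ℕ}
    (A E : Matrix (Fin n) (Fin n) ℝ) (B : Matrix (Fin n) (Fin m) ℝ)
    (Ac Ec : Matrix (Fin n) (Fin n) ℂ) (Bc : Matrix (Fin n) (Fin m) ℂ)
    (hAc : Ac = A.map Complex.ofReal) (hEc : Ec = E.map Complex.ofReal)
    (hBc : Bc = B.map Complex.ofReal)
    (V : Matrix (Fin n) (Fin q) ℂ)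
    (S : Matrix (Fin q) (Fin q) ℂ)
    (L : Matrix (Fin m) (Fin q) ℂ)
    (hSyl : Ac * V - Ec * V * S = Bc * L)
    (X : Matrix (Fin q) (Fin q) ℂ)
    (hXherm : X.IsHermitian) (hXinv : IsUnit X.det)
    (hXlyap : X * S + Sᴴ * X = Lᴴ * L)
    (Phat : Matrix (Fin n) (Fin n) ℂ) (hPhat : Phat = V * X⁻¹ * Vᴴ)
    (Bperp : Matrix (Fin n) (Fin m) ℂ) (hBperp : Bperp = Bc + Ec * V * X⁻¹ * Lᴴ) :
    Ac * Phat * Ecᵀ + Ec * Phat * Acᵀ + Bc * Bcᵀ = Bperp * Bperpᴴ := by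
  subst hPhat hBperp hAc hEc hBc
  rw [transpose_map_ofReal, transpose_map_ofReal, transpose_map_ofReal]
  exact lyapunov_residual_eq_mul_conjTranspose_s7 hSyl hXherm hXinv hXlyap
end

section
/- Let y ∈ ℂ^n and α ∈ ℂ with |α| < 1, and set β = 1/√(1 − |α|²) and γ = √(1 + Re(α)). Then the complex matrix Z_c = [y, β(ȳ − α y)] ∈ ℂ^{n×2} and the real matrix Z_r = (√2/γ)·[Re(y), β(Im(α)·Re(y) + γ²·Im(y))] ∈ ℝ^{n×2} satisfy Z_r Z_rᵀ = Z_c Z_c^H. -/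
open Matrix Complex

/-!
With `Θ = (√2 γ)⁻¹ [[γ² + i Im α, -i/β], [1/β, Im α + i γ²]]` one has `Z_r = Z_c Θ`: the columns of
`Z_r` are recovered from `y` and `ȳ = β⁻¹ z + α y` (`z` the second column of `Z_c`) via
`Re y = (y + ȳ)/2`, `Im y = (y - ȳ)/(2i)`. The identities `γ² = 1 + Re α` and `β² (1 - |α|²) = 1`
make `Θ` unitary, so `Z_r Z_rᵀ = Z_c Θ Θᴴ Z_cᴴ = Z_c Z_cᴴ`.
-/

theorem Matrix.mul_unitary_mul_conjTranspose_self {m n R : Type*} [Fintype n] [DecidableEq n]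
    [CommRing R] [StarRing R] (A : Matrix m n R) {U : Matrix n n R}
    (hU : U ∈ unitaryGroup n R) : (A * U) * (A * U)ᴴ = A * Aᴴ := by
  rw [conjTranspose_mul, Matrix.mul_assoc, ← Matrix.mul_assoc U, ← star_eq_conjTranspose U,
    mem_unitaryGroup_iff.mp hU, Matrix.one_mul]

theorem Matrix.map_ofReal_mul_transpose_self {m n : Type*} [Fintype n] (B : Matrix m n ℝ) :
    (B * Bᵀ).map ofReal = B.map ofReal * (B.map ofReal)ᴴ := by
  rw [← conjTranspose_map _ (fun _ => (conj_ofReal _).symm), conjTranspose_eq_transpose_of_trivial]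
  exact Matrix.map_mul (f := ofRealHom)

def complexAdiFactor {m : Type*} (y : m → ℂ) (α : ℂ) (β : ℝ) : Matrix m (Fin 2) ℂ :=
  of fun r => ![y r, (β : ℂ) * (star (y r) - α * y r)]

noncomputable def realAdiFactor {m : Type*} (y : m → ℂ) (α : ℂ) (β γ : ℝ) : Matrix m (Fin 2) ℝ :=
  of fun r => ![(Real.sqrt 2 / γ) * (y r).re,
    (Real.sqrt 2 / γ) * (β * (α.im * (y r).re + γ ^ 2 * (y r).im))]

noncomputable def adiUnitary (α : ℂ) (β γ : ℝ) : Matrix (Fin 2) (Fin 2) ℂ :=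
  ((Real.sqrt 2 * γ)⁻¹ : ℝ) • !![⟨γ ^ 2, α.im⟩, ⟨0, -β⁻¹⟩; ⟨β⁻¹, 0⟩, ⟨α.im, γ ^ 2⟩]

theorem adiUnitary_mem_unitaryGroup {α : ℂ} {β γ : ℝ} (hβ : β ^ 2 * (1 - normSq α) = 1)
    (hγ : γ ^ 2 = 1 + α.re) (hγ0 : γ ≠ 0) : adiUnitary α β γ ∈ unitaryGroup (Fin 2) ℂ := by
  have hβ0 : β ≠ 0 := by rintro rfl; simp at hβ
  have hsqrt2 : Real.sqrt 2 ^ 2 = 2 := Real.sq_sqrt zero_le_two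
  rw [normSq_apply] at hβ
  have hcolumn_normSq : (γ ^ 4 + α.im ^ 2) * β ^ 2 + 1 = 2 * γ ^ 2 * β ^ 2 := by
    linear_combination β ^ 2 * (γ ^ 2 - 1 + α.re) * hγ - hβ
  rw [mem_unitaryGroup_iff, adiUnitary]
  ext i j
  fin_cases i <;> fin_cases j <;>
    simp [star_eq_conjTranspose, mul_apply, Fin.sum_univ_two, Complex.ext_iff] <;>
    refine ⟨?_, by ring⟩ <;>
    field_simp <;>
    rw [hsqrt2]
  · linear_combination 2 * hcolumn_normSq
  · ring
  · ring
  · linear_combination 2 * hcolumn_normSq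

theorem map_ofReal_realAdiFactor {m : Type*} (y : m → ℂ) {α : ℂ} {β γ : ℝ}
    (hβ : β ^ 2 * (1 - normSq α) = 1) (hγ : γ ^ 2 = 1 + α.re) (hγ0 : γ ≠ 0) :
    (realAdiFactor y α β γ).map ofReal = complexAdiFactor y α β * adiUnitary α β γ := by
  have hβ0 : β ≠ 0 := by rintro rfl; simp at hβ
  rw [normSq_apply] at hβ
  ext r j
  fin_cases j <;>
    simp [realAdiFactor, complexAdiFactor, adiUnitary, mul_apply, Fin.sum_univ_two,
      Complex.ext_iff, sq] <;>
    field_simp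
  · constructor
    · linear_combination -(y r).re * hγ
    · linear_combination -Real.sqrt 2 * (y r).im * hγ
  · constructor
    · linear_combination β ^ 2 * ((1 - α.re) * (y r).im - α.im * (y r).re) * hγ + (y r).im * hβ
    · linear_combination -Real.sqrt 2 * β ^ 2 * ((1 - α.re) * (y r).re + α.im * (y r).im) * hγ
        - Real.sqrt 2 * (y r).re * hβ

theorem map_ofReal_realAdiFactor_mul_transpose {m : Type*} (y : m → ℂ) {α : ℂ} {β γ : ℝ}
    (hβ : β ^ 2 * (1 - normSq α) = 1) (hγ : γ ^ 2 = 1 + α.re) (hγ0 : γ ≠ 0) :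
    (realAdiFactor y α β γ * (realAdiFactor y α β γ)ᵀ).map ofReal =
      complexAdiFactor y α β * (complexAdiFactor y α β)ᴴ := by
  rw [map_ofReal_mul_transpose_self, map_ofReal_realAdiFactor y hβ hγ hγ0]
  exact mul_unitary_mul_conjTranspose_self _ (adiUnitary_mem_unitaryGroup hβ hγ hγ0)

/-- Equivalence of the complex and the real-arithmetic formulation of one
tangential ADI step for a complex conjugated shift pair (core identity in the
proof of Theorem 6): `Z_r Z_rᵀ = Z_c Z_cᴴ`. -/
theorem real_vs_complex_adi_block
    {n : ℕ} (y : Fin n → ℂ) (α : ℂ) (hα : ‖α‖ < 1)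
    (β γ : ℝ)
    (hβ : β = (Real.sqrt (1 - Complex.normSq α))⁻¹)
    (hγ : γ = Real.sqrt (1 + α.re))
    (Zc : Matrix (Fin n) (Fin 2) ℂ)
    (hZc : Zc = Matrix.of fun r => ![y r, (β : ℂ) * (star (y r) - α * y r)])
    (Zr : Matrix (Fin n) (Fin 2) ℝ)
    (hZr : Zr = Matrix.of fun r =>
      ![(Real.sqrt 2 / γ) * (y r).re,
        (Real.sqrt 2 / γ) * (β * (α.im * (y r).re + γ ^ 2 * (y r).im))]) :
    (Zr * Zrᵀ).map Complex.ofReal = Zc * Zcᴴ := by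
  have hnormSq : normSq α < 1 := by
    rw [normSq_eq_norm_sq]
    exact pow_lt_one₀ (norm_nonneg α) hα two_ne_zero
  have hre : 0 < 1 + α.re := by
    linarith [neg_abs_le α.re, abs_re_le_norm α]
  have hβ2 : β ^ 2 * (1 - normSq α) = 1 := by
    rw [hβ, inv_pow, Real.sq_sqrt (sub_nonneg.2 hnormSq.le)]
    exact inv_mul_cancel₀ (sub_pos.2 hnormSq).ne'
  have hγ2 : γ ^ 2 = 1 + α.re := hγ ▸ Real.sq_sqrt hre.le
  have hγ0 : γ ≠ 0 := hγ ▸ (Real.sqrt_pos.2 hre).ne'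
  obtain rfl : Zc = complexAdiFactor y α β := hZc
  obtain rfl : Zr = realAdiFactor y α β γ := hZr
  exact map_ofReal_realAdiFactor_mul_transpose y hβ2 hγ2 hγ0
end

section
/- Let A, E ∈ ℝ^{n×n}, B ∈ ℝ^{n×m}, s ∈ ℂ with Re(s) > 0, and assume A − sE is invertible. Set Z_1 = √(2 Re(s)) (A − sE)^{-1} B ∈ ℂ^{n×m} and B_⊥ = B + √(2 Re(s)) E Z_1. Then the Lyapunov residual of the one-step ADI approximation P̂_1 = Z_1 Z_1^H factorizes as A P̂_1 Eᵀ + E P̂_1 Aᵀ + B Bᵀ = B_⊥ B_⊥^H. -/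
/-!
Write `M = A − sE` and `c = √(2 Re s)`, so that `c² = s + s̄`. From `M Z₁ = c B` we get
`A Z₁ = c B + s E Z₁`; substituting this into `A Z₁ (E Z₁)ᴴ + E Z₁ (A Z₁)ᴴ` leaves
`c (B (E Z₁)ᴴ + E Z₁ Bᴴ) + (s + s̄) E Z₁ (E Z₁)ᴴ`, which together with `B Bᴴ` is exactly the expansion
of `(B + c E Z₁)(B + c E Z₁)ᴴ`. For real data the transposes are conjugate transposes.
-/

open Matrix Complex

namespace Matrix

variable {ι κ R : Type*} [Fintype ι] [Fintype κ] [CommRing R] [StarRing R]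

theorem lyapunov_residual_eq_mul_conjTranspose_s9 {A E : Matrix ι ι R} {B Z : Matrix ι κ R}
    {s c : R} (hc : star c = c) (hcc : c * c = s + star s) (hZ : (A - s • E) * Z = c • B) :
    A * (Z * Zᴴ) * Eᴴ + E * (Z * Zᴴ) * Aᴴ + B * Bᴴ
      = (B + c • (E * Z)) * (B + c • (E * Z))ᴴ := by
  have hAZ : A * Z = c • B + s • (E * Z) := by
    rw [← hZ, Matrix.sub_mul, Matrix.smul_mul, sub_add_cancel]
  calc A * (Z * Zᴴ) * Eᴴ + E * (Z * Zᴴ) * Aᴴ + B * Bᴴ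
      = A * Z * (E * Z)ᴴ + E * Z * (A * Z)ᴴ + B * Bᴴ := by
        simp only [conjTranspose_mul, Matrix.mul_assoc]
    _ = (B + c • (E * Z)) * (B + c • (E * Z))ᴴ := by
        rw [hAZ]
        simp only [conjTranspose_add, conjTranspose_smul, hc, Matrix.add_mul, Matrix.mul_add,
          Matrix.smul_mul, Matrix.mul_smul]
        linear_combination (norm := module) hcc.symm • ((E * Z) * (E * Z)ᴴ : Matrix ι ι R)

theorem conjTranspose_map_ofReal {m n : Type*} (A : Matrix m n ℝ) :
    (A.map ofReal)ᴴ = (A.map ofReal)ᵀ := by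
  rw [← conjTranspose_map _ fun x => (conj_ofReal x).symm, conjTranspose_eq_transpose_of_trivial,
    transpose_map]

end Matrix

/-- One-step residual factorization of the ADI iteration (equation (14) in the
proof of Lemma 3): for `Z₁ = √(2 Re s) (A − sE)⁻¹ B` and
`Bperp = B + √(2 Re s) E Z₁`, the Lyapunov residual of `P̂₁ = Z₁ Z₁ᴴ` equals
`Bperp Bperpᴴ`. -/
theorem adi_one_step_residual_factorization
    {n m : ℕ}
    (A E : Matrix (Fin n) (Fin n) ℝ) (B : Matrix (Fin n) (Fin m) ℝ)
    (Ac Ec : Matrix (Fin n) (Fin n) ℂ) (Bc : Matrix (Fin n) (Fin m) ℂ)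
    (hAc : Ac = A.map Complex.ofReal) (hEc : Ec = E.map Complex.ofReal)
    (hBc : Bc = B.map Complex.ofReal)
    (s : ℂ) (hs : 0 < s.re) (hinv : IsUnit (Ac - s • Ec).det)
    (Z₁ : Matrix (Fin n) (Fin m) ℂ)
    (hZ₁ : Z₁ = (Real.sqrt (2 * s.re) : ℂ) • ((Ac - s • Ec)⁻¹ * Bc))
    (Bperp : Matrix (Fin n) (Fin m) ℂ)
    (hBperp : Bperp = Bc + (Real.sqrt (2 * s.re) : ℂ) • (Ec * Z₁)) :
    Ac * (Z₁ * Z₁ᴴ) * Ecᵀ + Ec * (Z₁ * Z₁ᴴ) * Acᵀ + Bc * Bcᵀ = Bperp * Bperpᴴ := by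
  have hc : star (Real.sqrt (2 * s.re) : ℂ) = Real.sqrt (2 * s.re) := conj_ofReal _
  have hcc : (Real.sqrt (2 * s.re) : ℂ) * Real.sqrt (2 * s.re) = s + star s := by
    rw [← ofReal_mul, Real.mul_self_sqrt (by linarith), star_def, add_conj]
  have hMZ : (Ac - s • Ec) * Z₁ = (Real.sqrt (2 * s.re) : ℂ) • Bc := by
    rw [hZ₁, Matrix.mul_smul, ← Matrix.mul_assoc, mul_nonsing_inv _ hinv, Matrix.one_mul]
  have hAT : Acᵀ = Acᴴ := by rw [hAc, conjTranspose_map_ofReal]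
  have hET : Ecᵀ = Ecᴴ := by rw [hEc, conjTranspose_map_ofReal]
  have hBT : Bcᵀ = Bcᴴ := by rw [hBc, conjTranspose_map_ofReal]
  rw [hAT, hET, hBT, hBperp]
  exact lyapunov_residual_eq_mul_conjTranspose_s9 hc hcc hMZ
end

section
/- Let A, E ∈ ℝ^{n×n}, B ∈ ℝ^{n×m}, and let s_1, …, s_k ∈ ℂ with Re(s_i) > 0 and A − s_i E invertible for each i. Define B_{⊥,0} = B and, for i = 1, …, k, Z_i = √(2 Re(s_i)) (A − s_i E)^{-1} B_{⊥,i−1} and B_{⊥,i} = B_{⊥,i−1} + √(2 Re(s_i)) E Z_i. Then B_{⊥,k} = B + Σ_{i=1}^{k} √(2 Re(s_i)) E Z_i, and the low-rank factor Z = [Z_1, …, Z_k] satisfies the residual factorization A (Z Z^H) Eᵀ + E (Z Z^H) Aᵀ + B Bᵀ = B_{⊥,k} B_{⊥,k}^H. -/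
open Matrix Complex

/-!
With `γᵢ = √(2 Re sᵢ)`, the defining relation of `Zᵢ` reads `(A - sᵢ E) Zᵢ = γᵢ B⊥,ᵢ₋₁`.
Expanding `B⊥,ᵢ B⊥,ᵢᴴ` for `B⊥,ᵢ = B⊥,ᵢ₋₁ + γᵢ E Zᵢ` and eliminating `γᵢ B⊥,ᵢ₋₁` with this
relation, the terms `-(sᵢ + s̄ᵢ) E Zᵢ Zᵢᴴ Eᴴ` cancel against `γᵢ² E Zᵢ Zᵢᴴ Eᴴ`, leaving
`A Zᵢ Zᵢᴴ Eᴴ + E Zᵢ Zᵢᴴ Aᴴ = B⊥,ᵢ B⊥,ᵢᴴ - B⊥,ᵢ₋₁ B⊥,ᵢ₋₁ᴴ`. Since `Z Zᴴ = Σ Zᵢ Zᵢᴴ`, summing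
over `i` telescopes, and for real `A, E, B` the conjugate transposes are plain transposes.
-/

namespace Matrix

variable {l m n ι R : Type*}

theorem conjTranspose_map_ofReal_s10 (M : Matrix m n ℝ) :
    (M.map ((↑) : ℝ → ℂ))ᴴ = (M.map ((↑) : ℝ → ℂ))ᵀ := by
  rw [← conjTranspose_map _ fun x => (conj_ofReal x).symm, conjTranspose_eq_transpose_of_trivial,
    transpose_map]

theorem mul_conjTranspose_eq_sum_of_blocks [Fintype ι] [Fintype m] [NonUnitalSemiring R]
    [StarRing R] (Z : ι → Matrix l m R) (W : Matrix l (ι × m) R)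
    (hW : ∀ r p, W r p = Z p.1 r p.2) :
    W * Wᴴ = ∑ i, Z i * (Z i)ᴴ := by
  ext r r'
  simp only [mul_apply, conjTranspose_apply, hW, sum_apply, Fintype.sum_prod_type]

theorem adi_step_residual_eq [Fintype m] [Fintype n] [CommRing R] [StarRing R]
    (A E : Matrix n n R) (B Z : Matrix n m R) (s γ : R) (hγ : star γ = γ)
    (hγs : γ * γ = s + star s) (hZ : (A - s • E) * Z = γ • B) :
    A * (Z * Zᴴ) * Eᴴ + E * (Z * Zᴴ) * Aᴴ
      = (B + γ • (E * Z)) * (B + γ • (E * Z))ᴴ - B * Bᴴ := by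
  have hleft : γ • (B * (E * Z)ᴴ) = A * (Z * Zᴴ) * Eᴴ - s • (E * (Z * Zᴴ) * Eᴴ) := by
    rw [← Matrix.smul_mul, ← hZ]
    simp only [conjTranspose_mul, Matrix.sub_mul, Matrix.smul_mul, Matrix.mul_assoc]
  have hright : γ • (E * Z * Bᴴ) = E * (Z * Zᴴ) * Aᴴ - star s • (E * (Z * Zᴴ) * Eᴴ) := by
    rw [← Matrix.mul_smul, ← hγ, ← conjTranspose_smul, ← hZ]
    simp only [conjTranspose_mul, conjTranspose_sub, conjTranspose_smul, Matrix.mul_sub,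
      Matrix.mul_smul, Matrix.mul_assoc]
  have hsquare : (γ * γ) • (E * Z * (E * Z)ᴴ) = (s + star s) • (E * (Z * Zᴴ) * Eᴴ) := by
    rw [hγs]
    simp only [conjTranspose_mul, Matrix.mul_assoc]
  have hexpand : (B + γ • (E * Z)) * (B + γ • (E * Z))ᴴ
      = B * Bᴴ + γ • (B * (E * Z)ᴴ) + γ • (E * Z * Bᴴ) + (γ * γ) • (E * Z * (E * Z)ᴴ) := by
    simp only [conjTranspose_add, conjTranspose_smul, hγ, Matrix.add_mul, Matrix.mul_add,
      Matrix.smul_mul, Matrix.mul_smul, smul_add, smul_smul]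
    abel
  rw [hexpand, hleft, hright, hsquare, add_smul]
  abel

end Matrix

/-- k-step residual factorization of the reformulated block ADI iteration
(equations (9) and (16) in the proof of Lemma 3):
`B⊥,k = B + Σ_{i<k} √(2 Re sᵢ) E Zᵢ` and the concatenated low-rank factor
`Z = [Z₁,…,Z_k]` satisfies the residual factorization. -/
theorem adi_k_step_residual_factorization
    {n m : ℕ} (k : ℕ)
    (A E : Matrix (Fin n) (Fin n) ℝ) (B : Matrix (Fin n) (Fin m) ℝ)
    (Ac Ec : Matrix (Fin n) (Fin n) ℂ) (Bc : Matrix (Fin n) (Fin m) ℂ)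
    (hAc : Ac = A.map Complex.ofReal) (hEc : Ec = E.map Complex.ofReal)
    (hBc : Bc = B.map Complex.ofReal)
    (s : ℕ → ℂ) (hs : ∀ i < k, 0 < (s i).re)
    (hinv : ∀ i < k, IsUnit (Ac - s i • Ec).det)
    (Z Bp : ℕ → Matrix (Fin n) (Fin m) ℂ)
    (hBp0 : Bp 0 = Bc)
    (hZ : ∀ i < k,
      Z i = (Real.sqrt (2 * (s i).re) : ℂ) • ((Ac - s i • Ec)⁻¹ * Bp i))
    (hBpsucc : ∀ i < k,
      Bp (i + 1) = Bp i + (Real.sqrt (2 * (s i).re) : ℂ) • (Ec * Z i))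
    -- the concatenated low-rank factor Z = [Z₁, …, Z_k]
    (Zfull : Matrix (Fin n) (Fin k × Fin m) ℂ)
    (hZfull : ∀ r p, Zfull r p = Z p.1 r p.2) :
    Bp k = Bc + ∑ i ∈ Finset.range k, (Real.sqrt (2 * (s i).re) : ℂ) • (Ec * Z i)
      ∧ Ac * (Zfull * Zfullᴴ) * Ecᵀ + Ec * (Zfull * Zfullᴴ) * Acᵀ + Bc * Bcᵀ
          = Bp k * (Bp k)ᴴ := by
  have hstep : ∀ i < k, Ac * (Z i * (Z i)ᴴ) * Ecᴴ + Ec * (Z i * (Z i)ᴴ) * Acᴴ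
      = Bp (i + 1) * (Bp (i + 1))ᴴ - Bp i * (Bp i)ᴴ := fun i hi => by
    have hre : 0 ≤ 2 * (s i).re := by linarith [hs i hi]
    rw [hBpsucc i hi]
    refine adi_step_residual_eq _ _ _ _ (s i) _ (conj_ofReal _) ?_ ?_
    · rw [← ofReal_mul, Real.mul_self_sqrt hre, ← add_conj, star_def]
    · rw [hZ i hi, Matrix.mul_smul, ← Matrix.mul_assoc, mul_nonsing_inv _ (hinv i hi),
        Matrix.one_mul]
  constructor
  · rw [Finset.eq_sum_range_sub Bp k, hBp0]
    refine congrArg _ (Finset.sum_congr rfl fun i hi => ?_)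
    rw [hBpsucc i (Finset.mem_range.mp hi), add_sub_cancel_left]
  · subst hAc hEc hBc
    rw [← conjTranspose_map_ofReal_s10, ← conjTranspose_map_ofReal_s10, ← conjTranspose_map_ofReal_s10,
      mul_conjTranspose_eq_sum_of_blocks (fun i : Fin k => Z i) Zfull hZfull,
      Fin.sum_univ_eq_sum_range (fun i => Z i * (Z i)ᴴ), Finset.mul_sum, Finset.mul_sum,
      Finset.sum_mul, Finset.sum_mul, ← Finset.sum_add_distrib,
      Finset.sum_congr rfl fun i hi => hstep i (Finset.mem_range.mp hi),
      Finset.sum_range_sub (fun i => Bp i * (Bp i)ᴴ), hBp0, sub_add_cancel]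
end

section
/- Let s ∈ ℂ with Re(s) > 0 and let b ∈ ℂ^m with b^H b = 1. Set α = (b^H b̄)·Re(s)/s̄, S = diag(s, s̄) ∈ ℂ^{2×2}, L = √(2 Re(s))·[b, b̄] ∈ ℂ^{m×2}, and X = [[1, α], [ᾱ, 1]] ∈ ℂ^{2×2}. Then X is Hermitian and satisfies X S + S^H X = L^H L. -/
open Matrix Complex

/-! With `S` diagonal, `X S + Sᴴ X` is computed entrywise: its diagonal entries are
`s + s̄ = 2 Re s = ‖√(2 Re s) b‖²`, and its off-diagonal entry `2 s̄ α` equals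
`2 Re s · bᴴ b̄` exactly because of the choice of `α`. -/

namespace Matrix

theorem conjTranspose_fin_two {R : Type*} [Star R] (a b c d : R) :
    (!![a, b; c, d])ᴴ = !![star a, star c; star b, star d] := by
  ext i j
  fin_cases i <;> fin_cases j <;> rfl

theorem isHermitian_fin_two {R : Type*} [InvolutiveStar R] {a d : R} (b : R)
    (ha : IsSelfAdjoint a) (hd : IsSelfAdjoint d) : (!![a, b; star b, d]).IsHermitian := by
  rw [IsHermitian, conjTranspose_fin_two, ha.star_eq, hd.star_eq, star_star]

theorem conjTranspose_mul_self_of_two_columns {m R : Type*} [Fintype m] [NonUnitalSemiring R]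
    [StarRing R] (u v : m → R) :
    (of fun j => ![u j, v j])ᴴ * of (fun j => ![u j, v j]) =
      !![star u ⬝ᵥ u, star u ⬝ᵥ v; star v ⬝ᵥ u, star v ⬝ᵥ v] := by
  ext i k
  fin_cases i <;> fin_cases k <;> rfl

theorem diagonal_lyapunov_fin_two {R : Type*} [CommSemiring R] [StarRing R] (x y z w s t : R) :
    !![x, y; z, w] * !![s, 0; 0, t] + (!![s, 0; 0, t])ᴴ * !![x, y; z, w] =
      !![(s + star s) * x, (t + star s) * y; (s + star t) * z, (t + star t) * w] := by
  rw [conjTranspose_fin_two, mul_fin_two, mul_fin_two]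
  ext i j
  fin_cases i <;> fin_cases j <;> simp <;> ring

end Matrix

/-- Explicit solution of the 2×2 projected Lyapunov-type equation associated
with one complex conjugated shift pair in the tangential ADI iteration
(proof of Theorem 5): `X = [[1, α], [ᾱ, 1]]` is Hermitian and solves
`X S + Sᴴ X = Lᴴ L` with `S = diag(s, s̄)` and `L = √(2 Re s)·[b, b̄]`. -/
theorem two_by_two_lyapunov_solution
    {m : ℕ} (s : ℂ) (hs : 0 < s.re)
    (b : Fin m → ℂ) (hb : ∑ j, star (b j) * b j = 1)
    (α : ℂ)
    (hα : α = (∑ j, (starRingEnd ℂ (b j)) ^ 2) * ((s.re : ℂ) / star s))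
    (S : Matrix (Fin 2) (Fin 2) ℂ) (hS : S = !![s, 0; 0, star s])
    (L : Matrix (Fin m) (Fin 2) ℂ)
    (hL : L = Matrix.of fun j =>
      ![(Real.sqrt (2 * s.re) : ℂ) * b j, (Real.sqrt (2 * s.re) : ℂ) * star (b j)])
    (X : Matrix (Fin 2) (Fin 2) ℂ) (hX : X = !![1, α; star α, 1]) :
    X.IsHermitian ∧ X * S + Sᴴ * X = Lᴴ * L := by
  set c : ℂ := (Real.sqrt (2 * s.re) : ℂ)
  have hc : c * star c = 2 * s.re := by
    simp only [c, Complex.star_def, Complex.conj_ofReal, ← Complex.ofReal_mul,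
      Real.mul_self_sqrt (by positivity : (0 : ℝ) ≤ 2 * s.re)]
    push_cast; ring
  have hbb : star b ⬝ᵥ b = 1 := hb
  have hbb' : b ⬝ᵥ star b = 1 := by rw [dotProduct_comm, hbb]
  have hsα : star s * α = s.re * (star b ⬝ᵥ star b) := by
    have : star s ≠ 0 := star_ne_zero.mpr fun h => by simp [h] at hs
    rw [hα]
    field_simp
    simp [dotProduct, sq, mul_comm]
  have hsα' : s * star α = s.re * (b ⬝ᵥ b) := by
    simpa [star_dotProduct] using congrArg star hsα
  have hre : s + star s = 2 * s.re := by rw [Complex.star_def, Complex.add_conj]; push_cast; ring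
  change L = of fun j => ![(c • b) j, (c • star b) j] at hL
  subst hS hL hX
  refine ⟨isHermitian_fin_two α (.one _) (.one _), ?_⟩
  rw [diagonal_lyapunov_fin_two, conjTranspose_mul_self_of_two_columns]
  simp only [star_smul, smul_dotProduct, dotProduct_smul, smul_eq_mul, star_star, ← mul_assoc, hc]
  simp only [EmbeddingLike.apply_eq_iff_eq, vecCons_inj, and_true]
  refine ⟨⟨?_, ?_⟩, ?_, ?_⟩
  · rw [hre, hbb]
  · linear_combination 2 * hsα
  · linear_combination 2 * hsα'
  · rw [add_comm, hre, hbb']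
end

section
/- Let A, E ∈ ℝ^{n×n}, B ∈ ℝ^{n×m}, let s > 0 be a real shift with A − sE invertible, and let b_1, …, b_m ∈ ℝ^m be an orthonormal family. Consider the tangential ADI iteration with the constant shift s: B_{⊥,0} = B, z_i = √(2s) (A − sE)^{-1} B_{⊥,i−1} b_i, B_{⊥,i} = B_{⊥,i−1} + √(2s) E z_i b_iᵀ, for i = 1, …, m. Then z_i = √(2s) (A − sE)^{-1} B b_i for every i, so that [z_1, …, z_m] = √(2s) (A − sE)^{-1} B · [b_1, …, b_m]; i.e., the tangential iteration with m copies of one real shift and orthonormal tangential directions reproduces (up to the orthogonal factor [b_1, …, b_m]) the first block ADI iterate Z_1 = √(2s) (A − sE)^{-1} B. -/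
open Matrix

/-!
Each tangential step changes `B_⊥` by a rank-one term `√(2s) E zᵢ bᵢᵀ`, which annihilates every
later direction `bⱼ` (`j > i`) because the directions are orthogonal. Hence `B_⊥,i−1 bᵢ = B bᵢ`,
and with a single shift the tangential iterate `zᵢ` is the `i`-th column of `Z₁ [b₁, …, b_m]`.
-/

theorem mulVec_castSucc_eq_mulVec_zero {R ι κ : Type*} [CommSemiring R] [Fintype κ] {m : ℕ}
    (M : Fin (m + 1) → Matrix ι κ R) (U : Fin m → Matrix ι κ R) (b : Fin m → κ → R)
    (hM : ∀ k, M k.succ = M k.castSucc + U k) (hU : ∀ k i, k < i → U k *ᵥ b i = 0)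
    (i : Fin m) : M i.castSucc *ᵥ b i = M 0 *ᵥ b i := by
  suffices h : ∀ j : Fin (m + 1), j ≤ i.castSucc → M j *ᵥ b i = M 0 *ᵥ b i from h _ le_rfl
  intro j
  induction j using Fin.induction with
  | zero => exact fun _ => rfl
  | succ k ih =>
    intro hk
    have hki : k < i := Fin.succ_le_castSucc_iff.mp hk
    rw [hM, add_mulVec, hU k i hki, add_zero, ih (Fin.castSucc_lt_castSucc_iff.mpr hki).le]

theorem smul_mul_vecMulVec_mulVec_of_dotProduct_eq_zero {R ι κ : Type*} [CommSemiring R]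
    [Fintype ι] [Fintype κ] (c : R) (E : Matrix ι ι R) (z : ι → R) {v w : κ → R}
    (hvw : v ⬝ᵥ w = 0) : (c • (E * vecMulVec z v)) *ᵥ w = 0 := by
  rw [smul_mulVec, ← mulVec_mulVec, vecMulVec_mulVec, hvw]
  simp

theorem of_mulVec_eq_mul_transpose {R ι κ μ : Type*} [CommSemiring R] [Fintype κ]
    (X : Matrix ι κ R) (b : μ → κ → R) :
    (Matrix.of fun r c => (X *ᵥ b c) r) = X * (Matrix.of b)ᵀ := by
  ext r c
  simp [mulVec, dotProduct, mul_apply]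

theorem tangential_adi_reproduces_block_step_general
    {n m : ℕ}
    (A E : Matrix (Fin n) (Fin n) ℝ) (B : Matrix (Fin n) (Fin m) ℝ)
    (s : ℝ)
    (b : Fin m → Fin m → ℝ)
    (hb : ∀ i j, (∑ l, b i l * b j l) = if i = j then 1 else 0)
    (z : Fin m → Fin n → ℝ)
    (Bp : Fin (m + 1) → Matrix (Fin n) (Fin m) ℝ)
    (hBp0 : Bp 0 = B)
    (hz : ∀ i : Fin m,
      z i = Real.sqrt (2 * s) • ((A - s • E)⁻¹ *ᵥ (Bp i.castSucc *ᵥ b i)))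
    (hBpsucc : ∀ i : Fin m,
      Bp i.succ = Bp i.castSucc + Real.sqrt (2 * s) • (E * vecMulVec (z i) (b i))) :
    (∀ i : Fin m, z i = Real.sqrt (2 * s) • ((A - s • E)⁻¹ *ᵥ (B *ᵥ b i)))
      ∧ (Matrix.of fun (r : Fin n) (c : Fin m) => z c r)
          = Real.sqrt (2 * s) •
              ((A - s • E)⁻¹ * B * Matrix.of fun (j : Fin m) (i : Fin m) => b i j) := by
  have horth : ∀ k i, k < i → b k ⬝ᵥ b i = 0 := fun k i hki => by
    simpa [dotProduct, hki.ne] using hb k i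
  have hcol : ∀ i, z i = Real.sqrt (2 * s) • ((A - s • E)⁻¹ *ᵥ (B *ᵥ b i)) := fun i => by
    rw [hz i, mulVec_castSucc_eq_mulVec_zero Bp _ b hBpsucc
      (fun k i hki => smul_mul_vecMulVec_mulVec_of_dotProduct_eq_zero _ E _ (horth k i hki)),
      hBp0]
  refine ⟨hcol, ?_⟩
  calc (Matrix.of fun r c => z c r)
      = Real.sqrt (2 * s) • ((A - s • E)⁻¹ * B) * (Matrix.of b)ᵀ := by
        rw [← of_mulVec_eq_mul_transpose]
        simp only [hcol, smul_mulVec, mulVec_mulVec]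
    _ = _ := Matrix.smul_mul _ _ _

/-- The block ADI iteration is a special case of the tangential ADI iteration
(Section 4.4): with `m` copies of one real shift `s` and orthonormal tangential
directions `b₁, …, b_m`, the tangential iterates satisfy
`zᵢ = √(2s)(A − sE)⁻¹ B bᵢ`, so that
`[z₁, …, z_m] = √(2s)(A − sE)⁻¹ B · [b₁, …, b_m]`. -/
theorem tangential_adi_reproduces_block_step
    {n m : ℕ}
    (A E : Matrix (Fin n) (Fin n) ℝ) (B : Matrix (Fin n) (Fin m) ℝ)
    (s : ℝ) (hs : 0 < s) (hinv : IsUnit (A - s • E).det)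
    (b : Fin m → Fin m → ℝ)
    (hb : ∀ i j, (∑ l, b i l * b j l) = if i = j then 1 else 0)
    (z : Fin m → Fin n → ℝ)
    (Bp : Fin (m + 1) → Matrix (Fin n) (Fin m) ℝ)
    (hBp0 : Bp 0 = B)
    (hz : ∀ i : Fin m,
      z i = Real.sqrt (2 * s) • ((A - s • E)⁻¹ *ᵥ (Bp i.castSucc *ᵥ b i)))
    (hBpsucc : ∀ i : Fin m,
      Bp i.succ = Bp i.castSucc + Real.sqrt (2 * s) • (E * vecMulVec (z i) (b i))) :
    (∀ i : Fin m, z i = Real.sqrt (2 * s) • ((A - s • E)⁻¹ *ᵥ (B *ᵥ b i)))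
      ∧ (Matrix.of fun (r : Fin n) (c : Fin m) => z c r)
          = Real.sqrt (2 * s) •
              ((A - s • E)⁻¹ * B * Matrix.of fun (j : Fin m) (i : Fin m) => b i j) :=
  tangential_adi_reproduces_block_step_general A E B s b hb z Bp hBp0 hz hBpsucc
end
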